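/- arXiv:1312.0507 — 8 statements merged into one kernel-verified Lean document; each statement's English description precedes it below -/
import Mathlib

section
/- Let m ≥ 1 be an integer and set c = ⌈m/2⌉. For each 1 ≤ l ≤ c let P_{m,l} be the m×m diagonal 0–1 matrix whose (i,i) entry is 1 if and only if l ≤ i ≤ m+1−l. Then for every complex m×m matrix A one has κ_m ∘ A = (1/(c+1)) · Σ_{l=1}^{c} P_{m,l} A P_{m,l}. -/
open scoped Matrix

/-- The matrix `κ_m`, with 1-indexed entries
`κ_m(i,j) = min {i, j, m+1-i, m+1-j} / (⌈m/2⌉ + 1)`.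
Here the index `i : Fin m` corresponds to the 1-indexed entry `i+1`, so that
`m + 1 - (i+1) = m - i`. -/
noncomputable def kappa (m : ℕ) : Matrix (Fin m) (Fin m) ℂ :=
  fun i j =>
    (min (min (i.1 + 1) (j.1 + 1)) (min (m - i.1) (m - j.1)) : ℕ) /
      (((m + 1) / 2 : ℕ) + 1)

/-- The diagonal 0-1 matrix `P_{m,l}` whose `(i,i)` entry (1-indexed) is `1`
iff `l ≤ i ≤ m + 1 - l`. -/
def schurProj (m l : ℕ) : Matrix (Fin m) (Fin m) ℂ :=
  Matrix.diagonal (fun i => if l ≤ i.1 + 1 ∧ i.1 + 1 ≤ m + 1 - l then 1 else 0)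

/-- For every integer `m ≥ 1`, with `c = ⌈m/2⌉`, and every
complex `m × m` matrix `A`, the Schur (entrywise) product of `κ_m` with `A`
equals `(1/(c+1)) • ∑_{l=1}^{c} P_{m,l} A P_{m,l}`. -/
theorem kappa_hadamard_eq_sum_compressions (m : ℕ) (hm : 1 ≤ m)
    (A : Matrix (Fin m) (Fin m) ℂ) :
    Matrix.hadamard (kappa m) A =
      ((((m + 1) / 2 : ℕ) + 1 : ℂ))⁻¹ •
        ∑ l ∈ Finset.Icc 1 ((m + 1) / 2),
          schurProj m l * A * schurProj m l := by
  ext i j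
  set c : ℕ := (m + 1) / 2 with hcdef
  set N : ℕ := min (min (i.1 + 1) (j.1 + 1)) (min (m - i.1) (m - j.1)) with hN
  have hterm : ∀ l, (schurProj m l * A * schurProj m l) i j
      = (if l ≤ i.1 + 1 ∧ i.1 + 1 ≤ m + 1 - l then (1 : ℂ) else 0)
        * (if l ≤ j.1 + 1 ∧ j.1 + 1 ≤ m + 1 - l then (1 : ℂ) else 0) * A i j := by
    intro l
    simp [schurProj, Matrix.mul_diagonal, Matrix.diagonal_mul]
  have hsum : ∑ l ∈ Finset.Icc 1 c,
      ((if l ≤ i.1 + 1 ∧ i.1 + 1 ≤ m + 1 - l then (1 : ℂ) else 0)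
        * (if l ≤ j.1 + 1 ∧ j.1 + 1 ≤ m + 1 - l then (1 : ℂ) else 0)) = (N : ℂ) := by
    have hi := i.2
    have hj := j.2
    have hfilter : Finset.Icc 1 c = Finset.Icc 1 N ∪ Finset.Ioc N c := by
      ext l
      simp only [Finset.mem_Icc, Finset.mem_union, Finset.mem_Ioc]
      omega
    have hcongr : ∀ l ∈ Finset.Icc 1 c,
        ((if l ≤ i.1 + 1 ∧ i.1 + 1 ≤ m + 1 - l then (1 : ℂ) else 0)
          * (if l ≤ j.1 + 1 ∧ j.1 + 1 ≤ m + 1 - l then (1 : ℂ) else 0))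
        = if l ≤ N then (1 : ℂ) else 0 := by
      intro l hl
      simp only [Finset.mem_Icc] at hl
      by_cases h : l ≤ N
      · rw [if_pos h, if_pos (by omega), if_pos (by omega)]
        ring
      · rw [if_neg h]
        by_cases h1 : l ≤ i.1 + 1 ∧ i.1 + 1 ≤ m + 1 - l
        · rw [if_pos h1, if_neg (by omega)]; ring
        · rw [if_neg h1]; ring
    rw [Finset.sum_congr rfl hcongr, hfilter, Finset.sum_union (by
      simp only [Finset.disjoint_left, Finset.mem_Icc, Finset.mem_Ioc]
      omega)]
    have h1 : ∑ l ∈ Finset.Icc 1 N, (if l ≤ N then (1 : ℂ) else 0) = (N : ℂ) := by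
      rw [Finset.sum_congr rfl (fun l hl => by
        simp only [Finset.mem_Icc] at hl
        exact if_pos hl.2)]
      simp [Nat.card_Icc]
    have h2 : ∑ l ∈ Finset.Ioc N c, (if l ≤ N then (1 : ℂ) else 0) = 0 := by
      apply Finset.sum_eq_zero
      intro l hl
      simp only [Finset.mem_Ioc] at hl
      exact if_neg (by omega)
    rw [h1, h2, add_zero]
  simp only [Matrix.smul_apply, Matrix.sum_apply, hterm, smul_eq_mul]
  rw [← Finset.sum_mul, hsum]
  have hc0 : ((c : ℂ) + 1) ≠ 0 := by
    have : (0 : ℝ) < (c : ℝ) + 1 := by positivity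
    intro h
    have := congrArg Complex.re h
    simp at this
    linarith
  simp only [Matrix.hadamard_apply, kappa, ← hcdef, ← hN]
  push_cast
  field_simp
end

section
/- Let m ≥ 1 and k ≥ 1 be integers and let J_k denote the k×k all-ones matrix. For every positive semidefinite complex km×km matrix B (indexed by {1,…,k}×{1,…,m}), the matrix (J_k ⊗ κ_m) ∘ B is positive semidefinite, where ⊗ denotes the Kronecker product. In particular, Schur multiplication by κ_m is a completely positive map on M_m(ℂ). -/
open scoped Matrix Kronecker ComplexOrder

/-- The `k × k` all-ones matrix. -/
def allOnes (k : ℕ) : Matrix (Fin k) (Fin k) ℂ := fun _ _ => 1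

open Matrix

lemma sum_swap3 {n ι : Type*} [Fintype n] [Fintype ι] (g : n → n → ι → ℂ) :
    ∑ p, ∑ q, ∑ t, g p q t = ∑ t, ∑ p, ∑ q, g p q t :=
  calc ∑ p, ∑ q, ∑ t, g p q t
      = ∑ p, ∑ t, ∑ q, g p q t := Finset.sum_congr rfl fun _ _ => Finset.sum_comm
    _ = ∑ t, ∑ p, ∑ q, g p q t := Finset.sum_comm

lemma schur_gram {n ι : Type*} [Fintype n] [Fintype ι] (f : ι → n → ℂ)
    (B : Matrix n n ℂ) (hB : B.PosSemidef) :
    (Matrix.hadamard (Matrix.of fun p q => ∑ t, star (f t p) * f t q) B).PosSemidef := by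
  rw [posSemidef_iff_dotProduct_mulVec]
  constructor
  · ext p q
    simp only [conjTranspose_apply, hadamard_apply, of_apply, star_mul', star_sum, star_star,
      hB.1.apply]
    congr 1
    exact Finset.sum_congr rfl fun t _ => mul_comm _ _
  · intro x
    have key : star x ⬝ᵥ ((Matrix.hadamard (Matrix.of fun p q => ∑ t, star (f t p) * f t q) B) *ᵥ x)
        = ∑ t, star (fun p => f t p * x p) ⬝ᵥ (B *ᵥ fun p => f t p * x p) := by
      simp only [dotProduct, mulVec, hadamard_apply, of_apply, Finset.mul_sum, Finset.sum_mul,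
        Pi.star_apply, star_mul']
      rw [sum_swap3 (fun p q t => star (x p) * (star (f t p) * f t q * B p q * x q))]
      apply Finset.sum_congr rfl; intro t _
      apply Finset.sum_congr rfl; intro p _
      exact Finset.sum_congr rfl fun q _ => by ring
    rw [key]
    exact Finset.sum_nonneg fun t _ => hB.dotProduct_mulVec_nonneg _

lemma count_sum (m s : ℕ) (hs : s ≤ m) (z : ℂ) :
    ∑ t : Fin m, (if t.1 < s then z else 0) = (s : ℂ) * z := by
  rw [Fin.sum_univ_eq_sum_range (fun t => if t < s then z else 0), ← Finset.sum_filter]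
  have h : (Finset.range m).filter (· < s) = Finset.range s := by
    ext t; simp only [Finset.mem_filter, Finset.mem_range]; omega
  rw [h, Finset.sum_const, Finset.card_range, nsmul_eq_mul]


/-- For all integers `m, k ≥ 1` and every positive
semidefinite complex `km × km` matrix `B`, the Schur (entrywise) product
`(J_k ⊗ κ_m) ∘ B` is positive semidefinite.  In particular, Schur
multiplication by `κ_m` is a completely positive map on `M_m(ℂ)`. -/
theorem hadamard_kronecker_kappa_posSemidef (m k : ℕ) (hm : 1 ≤ m) (hk : 1 ≤ k)
    (B : Matrix (Fin k × Fin m) (Fin k × Fin m) ℂ) (hB : B.PosSemidef) :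
    (Matrix.hadamard (allOnes k ⊗ₖ kappa m) B).PosSemidef := by
  set c : ℝ := ((m + 1) / 2 : ℕ) + 1 with hc
  have hc0 : (0 : ℝ) < c := by positivity
  set r : ℂ := ((Real.sqrt c⁻¹ : ℝ) : ℂ) with hr
  set a : Fin m → ℕ := fun i => min (i.1 + 1) (m - i.1) with ha
  set f : Fin m → (Fin k × Fin m) → ℂ :=
    fun t p => if t.1 < a p.2 then r else 0 with hf
  have ham : ∀ i : Fin m, a i ≤ m := fun i =>
    le_trans (min_le_right _ _) (Nat.sub_le _ _)
  have hrr : star r * r = ((c⁻¹ : ℝ) : ℂ) := by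
    rw [hr, Complex.star_def, Complex.conj_ofReal, ← Complex.ofReal_mul,
      Real.mul_self_sqrt (inv_nonneg.2 hc0.le)]
  have hEq : allOnes k ⊗ₖ kappa m
      = Matrix.of fun p q => ∑ t, star (f t p) * f t q := by
    ext p q
    simp only [kroneckerMap_apply, allOnes, kappa, one_mul, of_apply]
    have step1 : ∀ t : Fin m, star (f t p) * f t q
        = if t.1 < min (a p.2) (a q.2) then ((c⁻¹ : ℝ) : ℂ) else 0 := by
      intro t
      by_cases h1 : t.1 < a p.2 <;> by_cases h2 : t.1 < a q.2
      · simp only [hf, if_pos h1, if_pos h2, if_pos (lt_min_iff.2 ⟨h1, h2⟩)]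
        exact hrr
      all_goals simp [hf, h1, h2, lt_min_iff]
    rw [Finset.sum_congr rfl fun t _ => step1 t,
      count_sum m _ (le_trans (min_le_left _ _) (ham _)) _]
    rw [show min (min (p.2.1 + 1) (q.2.1 + 1)) (min (m - p.2.1) (m - q.2.1))
        = min (a p.2) (a q.2) from min_min_min_comm _ _ _ _]
    rw [div_eq_mul_inv]
    congr 1
    rw [Complex.ofReal_inv]
    congr 1
    rw [hc]
    push_cast
    ring
  rw [hEq]
  exact schur_gram f B hB
end

section
/- Let m ≥ 1 and k ≥ 1 be integers and let J_k denote the k×k all-ones matrix. For every complex km×km matrix B (indexed by {1,…,k}×{1,…,m}), one has ‖(J_k ⊗ κ_m) ∘ B‖ ≤ (⌈m/2⌉/(⌈m/2⌉+1)) · ‖B‖, where ⊗ denotes the Kronecker product and ‖·‖ is the operator norm of a matrix acting on ℂ^{km} with the ℓ² norm. In particular, Schur multiplication by κ_m has completely bounded norm at most ⌈m/2⌉/(⌈m/2⌉+1) < 1. -/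
open scoped Matrix Kronecker

open Matrix
open scoped Matrix.Norms.L2Operator

namespace KappaAux

/-- `⌈m/2⌉`. -/
def nn (m : ℕ) : ℕ := (m + 1) / 2

/-- `min (i+1) (m-i)`, i.e. `min{i, m+1-i}` in 1-indexed terms. -/
def aa (m : ℕ) (i : Fin m) : ℕ := min (i.1 + 1) (m - i.1)

lemma aa_le_nn (m : ℕ) (i : Fin m) : aa m i ≤ nn m := by
  have := i.2
  unfold aa nn
  omega

/-- Indicator vector family. -/
noncomputable def uu (m : ℕ) (i : Fin m) (t : Fin (nn m)) : ℂ :=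
  if (t : ℕ) < aa m i then 1 else 0

lemma star_uu (m : ℕ) (i : Fin m) (t : Fin (nn m)) : star (uu m i t) = uu m i t := by
  unfold uu; split <;> simp

lemma norm_uu_sq (m : ℕ) (i : Fin m) (t : Fin (nn m)) :
    ‖uu m i t‖ ^ 2 = if (t : ℕ) < aa m i then 1 else 0 := by
  unfold uu; split <;> simp

lemma sum_indicator {N c : ℕ} (hc : c ≤ N) :
    (∑ t : Fin N, if (t : ℕ) < c then (1 : ℝ) else 0) = (c : ℝ) := by
  rw [Fin.sum_univ_eq_sum_range (fun t => if t < c then (1 : ℝ) else 0)]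
  have h : ∀ t, (if t < c then (1 : ℝ) else 0) = if t ∈ Finset.range c then (1:ℝ) else 0 := by
    intro t; simp [Finset.mem_range]
  simp_rw [h]
  rw [Finset.sum_ite_mem, Finset.inter_eq_right.2 (Finset.range_subset_range.2 hc)]
  simp

lemma sum_indicator_c {N c : ℕ} (hc : c ≤ N) :
    (∑ t : Fin N, if (t : ℕ) < c then (1 : ℂ) else 0) = (c : ℂ) := by
  rw [Fin.sum_univ_eq_sum_range (fun t => if t < c then (1 : ℂ) else 0)]
  have h : ∀ t, (if t < c then (1 : ℂ) else 0) = if t ∈ Finset.range c then (1:ℂ) else 0 := by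
    intro t; simp [Finset.mem_range]
  simp_rw [h]
  rw [Finset.sum_ite_mem, Finset.inter_eq_right.2 (Finset.range_subset_range.2 hc)]
  simp

lemma sum_uu_mul (m : ℕ) (i j : Fin m) :
    ∑ t : Fin (nn m), uu m i t * uu m j t = ((min (aa m i) (aa m j) : ℕ) : ℂ) := by
  have h : ∀ t : Fin (nn m), uu m i t * uu m j t =
      if (t : ℕ) < min (aa m i) (aa m j) then (1 : ℂ) else 0 := by
    intro t
    unfold uu
    by_cases h1 : (t : ℕ) < aa m i <;> by_cases h2 : (t : ℕ) < aa m j <;>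
      simp [h1, h2, lt_min_iff]
  simp_rw [h]
  exact sum_indicator_c (le_trans (min_le_left _ _) (aa_le_nn m i))

/-- The "partial-isometry-like" matrix giving a Gram factorisation. -/
noncomputable def Wmat (m k : ℕ) :
    Matrix ((Fin k × Fin m) × Fin (nn m)) (Fin k × Fin m) ℂ :=
  fun p q => if p.1 = q then uu m q.2 p.2 else 0

@[simp] lemma star_Wmat (m k : ℕ) (p q) : star (Wmat m k p q) = Wmat m k p q := by
  unfold Wmat; split
  · exact star_uu m _ _
  · exact star_zero _

lemma l2_opNorm_le_of_forall {ι κ' : Type*} [Fintype ι] [Fintype κ'] [DecidableEq κ']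
    (A : Matrix ι κ' ℂ) {c : ℝ} (hc : 0 ≤ c)
    (h : ∀ x : EuclideanSpace ℂ κ', ‖Matrix.toEuclideanLin A x‖ ≤ c * ‖x‖) : ‖A‖ ≤ c := by
  rw [Matrix.l2_opNorm_def]
  exact ContinuousLinearMap.opNorm_le_bound _ hc (fun x => h x)

lemma key_entry (m k : ℕ) (B : Matrix (Fin k × Fin m) (Fin k × Fin m) ℂ)
    (r s : Fin k × Fin m) :
    ((Wmat m k)ᴴ * (B ⊗ₖ (1 : Matrix (Fin (nn m)) (Fin (nn m)) ℂ)) * Wmat m k) r s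
      = (∑ t : Fin (nn m), uu m r.2 t * uu m s.2 t) * B r s := by
  obtain ⟨r1, r2⟩ := r
  obtain ⟨s1, s2⟩ := s
  simp only [Matrix.mul_apply, Matrix.conjTranspose_apply, star_Wmat]
  simp only [Wmat, kroneckerMap_apply, Fintype.sum_prod_type, Matrix.one_apply,
    Prod.mk.injEq, ite_and, ite_mul, zero_mul, mul_ite, mul_zero, mul_one, one_mul,
    Finset.sum_ite_eq, Finset.sum_ite_eq', Finset.mem_univ, if_true]
  simp only [Finset.sum_ite_irrel, Finset.sum_const_zero, Finset.sum_ite_eq,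
    Finset.sum_ite_eq', Finset.mem_univ, if_true]
  rw [Finset.sum_mul]
  refine Finset.sum_congr rfl fun t _ => ?_
  ring

lemma key_eq (m k : ℕ) (B : Matrix (Fin k × Fin m) (Fin k × Fin m) ℂ) :
    Matrix.hadamard (allOnes k ⊗ₖ kappa m) B
      = ((nn m : ℂ) + 1)⁻¹ •
        ((Wmat m k)ᴴ * (B ⊗ₖ (1 : Matrix (Fin (nn m)) (Fin (nn m)) ℂ)) * Wmat m k) := by
  ext r s
  rw [Matrix.smul_apply, key_entry, sum_uu_mul]
  simp only [Matrix.hadamard_apply, Matrix.kroneckerMap_apply, allOnes, kappa, one_mul,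
    smul_eq_mul]
  have hmin : min (min (r.2.1 + 1) (s.2.1 + 1)) (min (m - r.2.1) (m - s.2.1))
      = min (aa m r.2) (aa m s.2) := by
    unfold aa; omega
  rw [hmin]
  have hnn : ((m + 1) / 2 : ℕ) = nn m := rfl
  rw [hnn]
  ring

lemma norm_W_le (m k : ℕ) : ‖Wmat m k‖ ≤ Real.sqrt (nn m) := by
  apply l2_opNorm_le_of_forall _ (Real.sqrt_nonneg _)
  intro x
  rw [EuclideanSpace.norm_eq, EuclideanSpace.norm_eq,
    ← Real.sqrt_mul (by positivity : (0:ℝ) ≤ (nn m : ℝ))]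
  apply Real.sqrt_le_sqrt
  have happ : ∀ p : (Fin k × Fin m) × Fin (nn m),
      (toEuclideanLin (Wmat m k) x) p = uu m p.1.2 p.2 * x p.1 := by
    intro p
    simp only [toEuclideanLin_apply, PiLp.toLp_apply, Matrix.mulVec, dotProduct,
      Wmat, ite_mul, zero_mul, Finset.sum_ite_eq, Finset.mem_univ, if_true]
  calc ∑ p : (Fin k × Fin m) × Fin (nn m), ‖(toEuclideanLin (Wmat m k) x) p‖ ^ 2
      = ∑ r : Fin k × Fin m, (aa m r.2 : ℝ) * ‖x r‖ ^ 2 := by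
        simp_rw [happ, norm_mul, mul_pow]
        rw [Fintype.sum_prod_type]
        refine Finset.sum_congr rfl fun r _ => ?_
        dsimp only
        rw [← Finset.sum_mul]
        congr 1
        simp_rw [norm_uu_sq]
        exact sum_indicator (aa_le_nn m r.2)
    _ ≤ ∑ r : Fin k × Fin m, (nn m : ℝ) * ‖x r‖ ^ 2 := by
        apply Finset.sum_le_sum
        intro r _
        have : (aa m r.2 : ℝ) ≤ (nn m : ℝ) := Nat.cast_le.2 (aa_le_nn m r.2)
        nlinarith [sq_nonneg ‖x r‖]
    _ = (nn m : ℝ) * ∑ r : Fin k × Fin m, ‖x r‖ ^ 2 := by rw [Finset.mul_sum]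

lemma norm_kron_le (m k : ℕ) (B : Matrix (Fin k × Fin m) (Fin k × Fin m) ℂ) :
    ‖B ⊗ₖ (1 : Matrix (Fin (nn m)) (Fin (nn m)) ℂ)‖ ≤ ‖B‖ := by
  apply l2_opNorm_le_of_forall _ (norm_nonneg _)
  intro v
  have happ : ∀ p : (Fin k × Fin m) × Fin (nn m),
      (toEuclideanLin (B ⊗ₖ (1 : Matrix (Fin (nn m)) (Fin (nn m)) ℂ)) v) p
        = ∑ s : Fin k × Fin m, B p.1 s * v (s, p.2) := by
    intro p
    simp only [toEuclideanLin_apply, PiLp.toLp_apply, Matrix.mulVec, dotProduct,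
      kroneckerMap_apply, Matrix.one_apply, Fintype.sum_prod_type, mul_ite, mul_zero, mul_one,
      ite_mul, zero_mul, Finset.sum_ite_eq, Finset.sum_ite_eq', Finset.mem_univ, if_true]
  -- the slices of `v`
  set vt : Fin (nn m) → EuclideanSpace ℂ (Fin k × Fin m) :=
    fun t => (WithLp.equiv 2 _).symm (fun s => v (s, t)) with hvt
  have hle : ∑ p : (Fin k × Fin m) × Fin (nn m),
      ‖(toEuclideanLin (B ⊗ₖ (1 : Matrix (Fin (nn m)) (Fin (nn m)) ℂ)) v) p‖ ^ 2
      ≤ ‖B‖ ^ 2 * ‖v‖ ^ 2 := by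
    have hv2 : ‖v‖ ^ 2 = ∑ q : (Fin k × Fin m) × Fin (nn m), ‖v q‖ ^ 2 := by
      rw [EuclideanSpace.norm_eq, Real.sq_sqrt (by positivity)]
    calc ∑ p : (Fin k × Fin m) × Fin (nn m),
        ‖(toEuclideanLin (B ⊗ₖ (1 : Matrix (Fin (nn m)) (Fin (nn m)) ℂ)) v) p‖ ^ 2
        = ∑ t : Fin (nn m), ‖(EuclideanSpace.equiv (Fin k × Fin m) ℂ).symm (B *ᵥ vt t)‖ ^ 2 := by
          rw [Fintype.sum_prod_type, Finset.sum_comm]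
          refine Finset.sum_congr rfl fun t _ => ?_
          rw [EuclideanSpace.norm_eq, Real.sq_sqrt (by positivity)]
          refine Finset.sum_congr rfl fun r _ => ?_
          rw [happ]
          rfl
      _ ≤ ∑ t : Fin (nn m), (‖B‖ * ‖vt t‖) ^ 2 := by
          apply Finset.sum_le_sum
          intro t _
          have h1 := Matrix.l2_opNorm_mulVec B (vt t)
          have h2 : (0:ℝ) ≤ ‖(EuclideanSpace.equiv (Fin k × Fin m) ℂ).symm (B *ᵥ vt t)‖ :=
            norm_nonneg _
          nlinarith
      _ = ‖B‖ ^ 2 * ∑ t : Fin (nn m), ‖vt t‖ ^ 2 := by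
          rw [Finset.mul_sum]; refine Finset.sum_congr rfl fun t _ => ?_; ring
      _ = ‖B‖ ^ 2 * ‖v‖ ^ 2 := by
          rw [hv2, Fintype.sum_prod_type, Finset.sum_comm]
          congr 1
          refine Finset.sum_congr rfl fun t _ => ?_
          rw [EuclideanSpace.norm_eq, Real.sq_sqrt (by positivity)]
          refine Finset.sum_congr rfl fun s _ => ?_
          simp [hvt]
  calc ‖toEuclideanLin (B ⊗ₖ (1 : Matrix (Fin (nn m)) (Fin (nn m)) ℂ)) v‖
      = Real.sqrt (∑ p : (Fin k × Fin m) × Fin (nn m),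
          ‖(toEuclideanLin (B ⊗ₖ (1 : Matrix (Fin (nn m)) (Fin (nn m)) ℂ)) v) p‖ ^ 2) :=
        EuclideanSpace.norm_eq _
    _ ≤ Real.sqrt (‖B‖ ^ 2 * ‖v‖ ^ 2) := Real.sqrt_le_sqrt hle
    _ = ‖B‖ * ‖v‖ := by
        rw [Real.sqrt_mul (sq_nonneg _), Real.sqrt_sq (norm_nonneg _),
          Real.sqrt_sq (norm_nonneg _)]

end KappaAux

/-- For all integers `m, k ≥ 1` and every complex `km × km`
matrix `B`, the ℓ²-operator norm of the Schur product `(J_k ⊗ κ_m) ∘ B`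
is at most `(⌈m/2⌉ / (⌈m/2⌉ + 1)) · ‖B‖`.  In particular, Schur multiplication
by `κ_m` has completely bounded norm at most `⌈m/2⌉/(⌈m/2⌉+1) < 1`. -/
theorem opNorm_hadamard_kronecker_kappa_le (m k : ℕ) (hm : 1 ≤ m) (hk : 1 ≤ k)
    (B : Matrix (Fin k × Fin m) (Fin k × Fin m) ℂ) :
    ‖Matrix.toEuclideanCLM (𝕜 := ℂ) (Matrix.hadamard (allOnes k ⊗ₖ kappa m) B)‖ ≤
      ((((m + 1) / 2 : ℕ) : ℝ) / (((m + 1) / 2 : ℕ) + 1)) *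
        ‖Matrix.toEuclideanCLM (𝕜 := ℂ) B‖ := by
  classical
  open KappaAux in
  rw [← Matrix.cstar_norm_def, ← Matrix.cstar_norm_def, KappaAux.key_eq m k B]
  have hW : ‖KappaAux.Wmat m k‖ ≤ Real.sqrt (KappaAux.nn m) := KappaAux.norm_W_le m k
  have hWt : ‖(KappaAux.Wmat m k)ᴴ‖ = ‖KappaAux.Wmat m k‖ :=
    Matrix.l2_opNorm_conjTranspose _
  have hK := KappaAux.norm_kron_le m k B
  have hprod : ‖(KappaAux.Wmat m k)ᴴ *
      (B ⊗ₖ (1 : Matrix (Fin (KappaAux.nn m)) (Fin (KappaAux.nn m)) ℂ)) * KappaAux.Wmat m k‖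
      ≤ Real.sqrt (KappaAux.nn m) * ‖B‖ * Real.sqrt (KappaAux.nn m) := by
    calc ‖(KappaAux.Wmat m k)ᴴ *
        (B ⊗ₖ (1 : Matrix (Fin (KappaAux.nn m)) (Fin (KappaAux.nn m)) ℂ)) * KappaAux.Wmat m k‖
        ≤ ‖(KappaAux.Wmat m k)ᴴ *
            (B ⊗ₖ (1 : Matrix (Fin (KappaAux.nn m)) (Fin (KappaAux.nn m)) ℂ))‖ *
            ‖KappaAux.Wmat m k‖ := Matrix.l2_opNorm_mul _ _
      _ ≤ (‖(KappaAux.Wmat m k)ᴴ‖ *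
            ‖B ⊗ₖ (1 : Matrix (Fin (KappaAux.nn m)) (Fin (KappaAux.nn m)) ℂ)‖) *
            ‖KappaAux.Wmat m k‖ :=
          mul_le_mul_of_nonneg_right (Matrix.l2_opNorm_mul _ _) (norm_nonneg _)
      _ ≤ Real.sqrt (KappaAux.nn m) * ‖B‖ * Real.sqrt (KappaAux.nn m) := by
          rw [hWt]
          exact mul_le_mul (mul_le_mul hW hK (norm_nonneg _) (Real.sqrt_nonneg _)) hW
            (norm_nonneg _) (by positivity)
  have hc : ‖((KappaAux.nn m : ℂ) + 1)⁻¹‖ = ((KappaAux.nn m : ℝ) + 1)⁻¹ := by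
    rw [norm_inv]
    congr 1
    rw [show ((KappaAux.nn m : ℂ) + 1) = ((KappaAux.nn m + 1 : ℕ) : ℂ) by push_cast; ring,
      Complex.norm_natCast]
    push_cast; ring
  rw [norm_smul, hc]
  have hnn : ((m + 1) / 2 : ℕ) = KappaAux.nn m := rfl
  rw [hnn]
  have hpos : (0:ℝ) < (KappaAux.nn m : ℝ) + 1 := by positivity
  calc ((KappaAux.nn m : ℝ) + 1)⁻¹ * ‖(KappaAux.Wmat m k)ᴴ *
        (B ⊗ₖ (1 : Matrix (Fin (KappaAux.nn m)) (Fin (KappaAux.nn m)) ℂ)) * KappaAux.Wmat m k‖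
      ≤ ((KappaAux.nn m : ℝ) + 1)⁻¹ *
          (Real.sqrt (KappaAux.nn m) * ‖B‖ * Real.sqrt (KappaAux.nn m)) :=
        mul_le_mul_of_nonneg_left hprod (by positivity)
      _ = ((KappaAux.nn m : ℝ) / ((KappaAux.nn m : ℝ) + 1)) * ‖B‖ := by
        rw [show Real.sqrt (KappaAux.nn m) * ‖B‖ * Real.sqrt (KappaAux.nn m)
            = (Real.sqrt (KappaAux.nn m) * Real.sqrt (KappaAux.nn m)) * ‖B‖ by ring,
          Real.mul_self_sqrt (by positivity)]
        field_simp
end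

section
/- Let E be a directed graph, m ≥ 1 and p ≥ 0 integers. Suppose μ, ν ∈ E* satisfy p ≤ |μ|, |ν| < p + m, and suppose there is a path λ in E(m) (possibly of length 0) with s(λ) = r(i_m(μ)) such that i_m(ν) = i_m(μ)λ (concatenation of paths in E(m)). Then μ = ν (and consequently λ has length 0). -/
/- A directed graph is presented by a vertex type `V`, an edge type `E`, and
source/range maps `gs gr : E → V`.  A finite path is encoded as a pair
`(v, es) : V × List E`: the vertex `v` is the source, and `es` is the list of
edges `μ₁, …, μₙ` (so a vertex is the path `(v, [])` of length 0).  Validity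
of the encoding (`IsPath`): if `es` is nonempty then `v` is the source of the
first edge, and consecutive edges are composable (`gr μᵢ = gs μᵢ₊₁`). -/

variable {V E : Type*}

/-- `(v, es)` is a valid path for the graph structure `(gs, gr)`. -/
def IsPath (gs gr : E → V) (p : V × List E) : Prop :=
  (∀ e ∈ p.2.head?, gs e = p.1) ∧ p.2.Chain' fun a b => gr a = gs b

/-- The range of a path: `gr` of the last edge, or the base vertex for a
length-zero path. -/
def pathRange (gr : E → V) (p : V × List E) : V :=
  p.2.getLast?.elim p.1 gr

/- The graph `E(m)`: its vertices are the paths of length `< m` in `E`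
(encoded in `V × List E`), and its edges are pairs `(e, μ)` with `e ∈ E¹`,
`μ ∈ E^{<m}` and `r(e) = s(μ)` (encoded in `E × (V × List E)`), with range
`r(e, μ) = μ` and source `s(e, μ) = eμ` if `|μ| < m - 1` and
`s(e, μ) = s(e)` (a length-zero path) if `|μ| = m - 1`. -/

/-- The source map of `E(m)` (on raw data). -/
def emSrc (gs : E → V) (m : ℕ) (q : E × (V × List E)) : V × List E :=
  if q.2.2.length < m - 1 then (gs q.1, q.1 :: q.2.2) else (gs q.1, [])

/-- The range map of `E(m)` (on raw data). -/
def emRng (q : E × (V × List E)) : V × List E := q.2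

/-- `p` encodes a vertex of `E(m)`: a valid path in `E` of length `< m`. -/
def IsEmVertex (gs gr : E → V) (m : ℕ) (p : V × List E) : Prop :=
  IsPath gs gr p ∧ p.2.length < m

/-- `q` encodes an edge of `E(m)`: a pair `(e, μ)` with `μ ∈ E^{<m}` and
`r(e) = s(μ)`. -/
def IsEmEdge (gs gr : E → V) (m : ℕ) (q : E × (V × List E)) : Prop :=
  IsEmVertex gs gr m q.2 ∧ gr q.1 = q.2.1

/-- A valid path in the graph `E(m)`: a path for the graph structure
`(emSrc gs m, emRng)` all of whose vertices and edges are genuine vertices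
and edges of `E(m)`. -/
def IsEmPath (gs gr : E → V) (m : ℕ)
    (P : (V × List E) × List (E × (V × List E))) : Prop :=
  IsPath (emSrc gs m) emRng P ∧ IsEmVertex gs gr m P.1 ∧
    ∀ q ∈ P.2, IsEmEdge gs gr m q

/-- The truncation `[μ]_m`: the initial segment of `μ` with
`|[μ]_m| = |μ| mod m`. -/
def imTrunc (m : ℕ) (p : V × List E) : V × List E :=
  (p.1, p.2.take (p.2.length % m))

/-- The edge list of `i_m(μ)`: the `j`-th edge of `i_m(μ)` is
`(μⱼ, [μⱼ₊₁ ⋯ μₙ]_m)`.  This agrees with the definition of `i_m` by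
`i_m(v) = v`, `i_m(μ) = (μ₁, μ₂⋯μₙ)(μ₂, μ₃⋯μₙ)⋯(μₙ, r(μ))` for
`1 ≤ |μ| ≤ m`, and recursively
`i_m(μ) = i_m([μ]_m) i_m(μ′) i_m(μ″)` for `μ = [μ]_m μ′ μ″` with
`|μ′| = m`. -/
def imEdgeList (gr : E → V) (m : ℕ) : List E → List (E × (V × List E))
  | [] => []
  | e :: es => (e, (gr e, es.take (es.length % m))) :: imEdgeList gr m es

/-- The path `i_m(μ)` (raw data): its source vertex is `[μ]_m` and its edges
are given by `imEdgeList`. -/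
def imPath (gr : E → V) (m : ℕ) (p : V × List E) :
    (V × List E) × List (E × (V × List E)) :=
  (imTrunc m p, imEdgeList gr m p.2)


lemma imEdgeList_length (gr : E → V) (m : ℕ) (es : List E) :
    (imEdgeList gr m es).length = es.length := by
  induction es with
  | nil => rfl
  | cons e es ih => simp [imEdgeList, ih]

lemma imEdgeList_map_fst (gr : E → V) (m : ℕ) (es : List E) :
    (imEdgeList gr m es).map Prod.fst = es := by
  induction es with
  | nil => rfl
  | cons e es ih => simp [imEdgeList, ih]

/-- Let `(V, E, gs, gr)` be a directed graph, `m ≥ 1` and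
`p ≥ 0`.  Suppose `μ, ν ∈ E*` satisfy `p ≤ |μ|, |ν| < p + m`, and suppose
there is a path `lam` in `E(m)` (possibly of length 0) with
`s(lam) = r(i_m(μ))` such that `i_m(ν) = i_m(μ) lam` (concatenation of paths
in `E(m)`).  Then `μ = ν` (and consequently `lam` has length 0). -/
theorem imPath_eq_of_extends (gs gr : E → V) (m p : ℕ) (hm : 1 ≤ m)
    (μ ν : V × List E) (hμ : IsPath gs gr μ) (hν : IsPath gs gr ν)
    (hμlen : p ≤ μ.2.length) (hμlen' : μ.2.length < p + m)
    (hνlen : p ≤ ν.2.length) (hνlen' : ν.2.length < p + m)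
    (lam : (V × List E) × List (E × (V × List E)))
    (hlam : IsEmPath gs gr m lam)
    (hlamSrc : lam.1 = pathRange emRng (imPath gr m μ))
    (hconcat : imPath gr m ν
      = ((imPath gr m μ).1, (imPath gr m μ).2 ++ lam.2)) :
    μ = ν := by
  have h1 : imTrunc m ν = imTrunc m μ := congrArg Prod.fst hconcat
  have h2 : imEdgeList gr m ν.2 = imEdgeList gr m μ.2 ++ lam.2 :=
    congrArg Prod.snd hconcat
  -- lengths
  have hlen : ν.2.length = μ.2.length + lam.2.length := by
    have := congrArg List.length h2
    simpa [imEdgeList_length] using this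
  -- mod m equality from imTrunc
  have hmod : ν.2.length % m = μ.2.length % m := by
    have := congrArg (fun q : V × List E => q.2.length) h1
    simpa [imTrunc, Nat.min_eq_left (Nat.mod_le _ _)] using this
  have hk : lam.2.length = 0 := by
    have hklt : lam.2.length < m := by omega
    have hdvd : m ∣ lam.2.length := by
      have : ν.2.length ≡ μ.2.length [MOD m] := hmod
      have := (Nat.modEq_iff_dvd' (by omega : μ.2.length ≤ ν.2.length)).mp
        this.symm
      simpa [hlen] using this
    exact Nat.eq_zero_of_dvd_of_lt hdvd hklt
  have hnil : lam.2 = [] := List.length_eq_zero_iff.mp hk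
  have hsnd : ν.2 = μ.2 := by
    have : imEdgeList gr m ν.2 = imEdgeList gr m μ.2 := by
      simpa [hnil] using h2
    have := congrArg (List.map Prod.fst) this
    simpa [imEdgeList_map_fst] using this
  have hfst : ν.1 = μ.1 := by
    simpa [imTrunc] using congrArg Prod.fst h1
  exact Prod.ext hfst.symm hsnd.symm
end

section
/- Let E be a directed graph, m ≥ 1 an integer, and H ⊆ E⁰ a hereditary subset (i.e. s(e) ∈ H implies r(e) ∈ H for every e ∈ E¹). Define H(m) := {μ ∈ E^{<m} : s(μ) ∈ H} ⊆ E(m)⁰. Then: (i) H(m) is hereditary in E(m); and (ii) the subgraph of E(m) with vertex set H(m) and edge set {ξ ∈ E(m)¹ : s(ξ) ∈ H(m)} coincides with (HE)(m), where HE denotes the subgraph of E with vertex set H and edge set {e ∈ E¹ : s(e) ∈ H} (a directed graph, since H is hereditary), and paths in HE are identified with paths in E all of whose edges lie in HE. -/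
/- A directed graph is presented by a vertex type `V`, an edge type `E`, and
source/range maps `gs gr : E → V`.  A finite path is encoded as a pair
`(v, es) : V × List E`: the vertex `v` is the source, and `es` is the list of
edges `μ₁, …, μₙ` (so a vertex is the path `(v, [])` of length 0).  Validity
of the encoding (`IsPath`): if `es` is nonempty then `v` is the source of the
first edge, and consecutive edges are composable (`gr μᵢ = gs μᵢ₊₁`). -/

variable {V E : Type*}

lemma path_edges_in_H {gs gr : E → V} {H : Set V}
    (hH : ∀ e : E, gs e ∈ H → gr e ∈ H) :
    ∀ (l : List E) (v : V), (∀ e ∈ l.head?, gs e = v) →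
      l.Chain' (fun a b => gr a = gs b) → v ∈ H → ∀ e ∈ l, gs e ∈ H := by
  intro l
  induction l with
  | nil => intro v _ _ _ e he; simp at he
  | cons a t ih =>
    intro v hhead hchain hv e he
    have ha : gs a = v := hhead a rfl
    have haH : gs a ∈ H := ha ▸ hv
    rcases List.mem_cons.mp he with he | he
    · subst he; exact haH
    · refine ih (gr a) ?_ hchain.tail (hH a haH) e he
      intro e' he'
      exact ((List.isChain_cons.mp hchain).1 e' he').symm

/-- Let `(V, E, gs, gr)` be a directed graph, `m ≥ 1`, and
`H ⊆ V` a hereditary set of vertices (`hH`).  Let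
`H(m) = {μ ∈ E^{<m} : s(μ) ∈ H}` (the set `HmSet` below).  Then:

(i) `H(m)` is hereditary in `E(m)`: for every edge `ξ` of `E(m)` with
`s(ξ) ∈ H(m)` one has `r(ξ) ∈ H(m)`; and

(ii) the subgraph of `E(m)` with vertex set `H(m)` and edge set
`{ξ ∈ E(m)¹ : s(ξ) ∈ H(m)}` coincides with `(HE)(m)`, where `HE` is the
subgraph of `E` with vertex set `H` and edge set `{e ∈ E¹ : s(e) ∈ H}`, and
paths in `HE` are identified with paths in `E` all of whose edges lie in
`HE`.  Concretely: the vertices of `(HE)(m)` — the paths of length `< m`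
lying in `HE` — are exactly the members of `H(m)`, and the edges of
`(HE)(m)` — the pairs `(e, μ)` with `e` an edge of `HE`, `μ` a path of
length `< m` in `HE` and `r(e) = s(μ)` — are exactly the edges of `E(m)`
whose `E(m)`-source lies in `H(m)`.  (The source and range maps of both
subgraphs are the restrictions of those of `E(m)`, so these two set
equalities say precisely that the graphs coincide.) -/
theorem hereditary_Em_and_subgraph_eq (gs gr : E → V) (m : ℕ) (hm : 1 ≤ m)
    (H : Set V) (hH : ∀ e : E, gs e ∈ H → gr e ∈ H) :
    -- `H(m)` as a set of vertices of `E(m)`: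
    let HmSet : Set (V × List E) :=
      {p | IsEmVertex gs gr m p ∧ p.1 ∈ H}
    -- (i) `H(m)` is hereditary in `E(m)`:
    (∀ q : E × (V × List E), IsEmEdge gs gr m q →
        emSrc gs m q ∈ HmSet → emRng q ∈ HmSet) ∧
    -- (ii) the vertex sets coincide:
    ({p : V × List E | IsEmVertex gs gr m p ∧ p.1 ∈ H ∧ ∀ e ∈ p.2, gs e ∈ H}
        = HmSet) ∧
    -- (ii) the edge sets coincide:
    ({q : E × (V × List E) | IsEmEdge gs gr m q ∧ gs q.1 ∈ H ∧
        q.2.1 ∈ H ∧ ∀ e ∈ q.2.2, gs e ∈ H}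
      = {q : E × (V × List E) | IsEmEdge gs gr m q ∧ emSrc gs m q ∈ HmSet}) := by
  intro HmSet
  have srcH : ∀ q : E × (V × List E), emSrc gs m q ∈ HmSet → gs q.1 ∈ H := by
    intro q hq
    unfold emSrc at hq
    split at hq <;> exact hq.2
  have srcVal : ∀ q : E × (V × List E), IsEmEdge gs gr m q → gs q.1 ∈ H →
      emSrc gs m q ∈ HmSet := by
    intro q ⟨⟨⟨hhd, hch⟩, hlen⟩, hr⟩ hgs
    unfold emSrc
    split_ifs with h
    · refine ⟨⟨⟨?_, ?_⟩, ?_⟩, hgs⟩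
      · intro e he; simp at he; subst he; rfl
      · refine List.isChain_cons.mpr ⟨?_, hch⟩
        intro e' he'; rw [hr]; exact (hhd e' he').symm
      · simpa using Nat.lt_of_lt_of_le (Nat.add_lt_add_right h 1) (by omega)
    · exact ⟨⟨⟨by simp, List.isChain_nil⟩, hm⟩, hgs⟩
  refine ⟨?_, ?_, ?_⟩
  · intro q hq hsrc
    have hgs : gs q.1 ∈ H := srcH q hsrc
    exact ⟨hq.1, hq.2 ▸ hH q.1 hgs⟩
  · ext p
    simp only [Set.mem_setOf_eq]
    constructor
    · rintro ⟨hv, hp, _⟩; exact ⟨hv, hp⟩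
    · rintro ⟨hv, hp⟩
      exact ⟨hv, hp, path_edges_in_H hH p.2 p.1 hv.1.1 hv.1.2 hp⟩
  · ext q
    simp only [Set.mem_setOf_eq]
    constructor
    · rintro ⟨he, hgs, _, _⟩
      exact ⟨he, srcVal q he hgs⟩
    · rintro ⟨he, hsrc⟩
      have hgs : gs q.1 ∈ H := srcH q hsrc
      have h1 : q.2.1 ∈ H := he.2 ▸ hH q.1 hgs
      exact ⟨he, hgs, h1,
        path_edges_in_H hH q.2.2 q.2.1 he.1.1.1 he.1.1.2 h1⟩
end

section
/- Let E be a directed graph satisfying Condition (K) in which every vertex connects to a cycle. Then for every finite set V ⊆ E⁰ of vertices and every finite set F ⊆ E¹ of edges, there exists a finite subgraph G of E with V ⊆ G⁰ and F ⊆ G¹ such that every vertex of G connects to a cycle within the graph G, and G satisfies Condition (K). -/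
/- A directed graph is presented by a vertex type `V`, an edge type `E`, and
source/range maps `gs gr : E → V`.  A path of length `n ≥ 1` is a list
`[e₁, …, eₙ]` of edges satisfying the chain condition `gr eᵢ = gs eᵢ₊₁`;
its source is `gs e₁` and its range is `gr eₙ`.  Subgraphs are given by a set
of vertices and a set of edges whose endpoints lie in the vertex set; a
predicate relative to an edge set `E₁ ⊆ E` is the corresponding notion for
the subgraph with edge set `E₁`. -/

variable {V E : Type*}

/-- The chain condition making a list of edges a path. -/
def IsEdgeChain (gs gr : E → V) (es : List E) : Prop :=
  es.Chain' fun a b => gr a = gs b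

/-- `es` is a cycle based at `v`, lying in the edge set `E₁`. -/
def IsCycleAt (gs gr : E → V) (E₁ : Set E) (v : V) (es : List E) : Prop :=
  es ≠ [] ∧ (∀ e ∈ es, e ∈ E₁) ∧ IsEdgeChain gs gr es ∧
    (∀ f ∈ es.head?, gs f = v) ∧ ∀ e ∈ es.getLast?, gr e = v

/-- `es` is a first-return path at `v` in the edge set `E₁`: a cycle based at
`v` such that `gs eᵢ ≠ v` for `2 ≤ i ≤ n` (1-indexed). -/
def IsFirstReturn (gs gr : E → V) (E₁ : Set E) (v : V) (es : List E) : Prop :=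
  IsCycleAt gs gr E₁ v es ∧
    ∀ (i : ℕ) (h : i < es.length), 1 ≤ i → gs (es.get ⟨i, h⟩) ≠ v

/-- Condition (K) for the subgraph with edge set `E₁`: every vertex at which
there is a first-return path admits at least two distinct first-return
paths. -/
def CondK (gs gr : E → V) (E₁ : Set E) : Prop :=
  ∀ (v : V) (es : List E), IsFirstReturn gs gr E₁ v es →
    ∃ es' : List E, IsFirstReturn gs gr E₁ v es' ∧ es' ≠ es

/-- The one-step reachability relation within the edge set `E₁`. -/
def GraphStep (gs gr : E → V) (E₁ : Set E) (x y : V) : Prop :=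
  ∃ e ∈ E₁, gs e = x ∧ gr e = y

/-- `v` connects to a cycle within the edge set `E₁`: there is a (possibly
length-zero) path from `v` to a vertex `w` at which there is a cycle, all
within `E₁`. -/
def ConnectsToCycleIn (gs gr : E → V) (E₁ : Set E) (v : V) : Prop :=
  ∃ (w : V) (es : List E),
    Relation.ReflTransGen (GraphStep gs gr E₁) v w ∧ IsCycleAt gs gr E₁ w es

section Walks

variable (gs gr : E → V) (E₁ : Set E)

/-- A walk from `x` to `y` along edges in `E₁`. -/
def IsWalk (x y : V) (es : List E) : Prop :=
  (∀ e ∈ es, e ∈ E₁) ∧ IsEdgeChain gs gr es ∧ (∀ h ∈ es.head?, gs h = x) ∧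
    (∀ l ∈ es.getLast?, gr l = y) ∧ (es = [] → x = y)

variable {gs gr E₁}

lemma isWalk_nil {x : V} : IsWalk gs gr E₁ x x [] := by
  simp [IsWalk, IsEdgeChain, List.Chain']

lemma isWalk_nil_iff {x y : V} : IsWalk gs gr E₁ x y [] ↔ x = y := by
  simp [IsWalk, IsEdgeChain, List.Chain']

lemma isWalk_cons {x y : V} {f : E} {t : List E} :
    IsWalk gs gr E₁ x y (f :: t) ↔ f ∈ E₁ ∧ gs f = x ∧ IsWalk gs gr E₁ (gr f) y t := by
  unfold IsWalk IsEdgeChain List.Chain'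
  rw [List.isChain_cons]
  cases t with
  | nil =>
    constructor
    · rintro ⟨hm, ⟨-, -⟩, hh, hl, -⟩
      exact ⟨hm f (by simp), hh f rfl, by simp, by simp [IsEdgeChain], by simp, by simp,
        fun _ => hl f rfl⟩
    · rintro ⟨hf, hx, -, -, -, -, himp⟩
      refine ⟨by rintro e he; simp at he; subst he; exact hf, ⟨by simp, by simp [IsEdgeChain]⟩,
        by simpa using hx, ?_, by simp⟩
      intro l hl'
      simp at hl'
      subst hl'
      exact himp rfl
  | cons g t' =>
    rw [List.getLast?_cons_cons]
    constructor
    · rintro ⟨hm, ⟨hch, hcn⟩, hh, hl, -⟩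
      refine ⟨hm f (by simp), hh f rfl, fun e he => hm e (by simp [he]), hcn, ?_, hl, by simp⟩
      intro h hh'
      simp at hh'
      subst hh'
      exact (hch g rfl).symm
    · rintro ⟨hf, hx, hm, hcn, hh, hl, -⟩
      refine ⟨?_, ⟨?_, hcn⟩, by simpa using hx, hl, by simp⟩
      · rintro e he
        rcases List.mem_cons.mp he with rfl | he'
        · exact hf
        · exact hm e he'
      · intro y' hy'
        simp at hy'
        subst hy'
        exact (hh g rfl).symm

lemma isWalk_singleton {f : E} (hf : f ∈ E₁) : IsWalk gs gr E₁ (gs f) (gr f) [f] := by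
  rw [isWalk_cons]; exact ⟨hf, rfl, isWalk_nil⟩

lemma IsWalk.append {x y z : V} {l₁ l₂ : List E} (h₁ : IsWalk gs gr E₁ x y l₁)
    (h₂ : IsWalk gs gr E₁ y z l₂) : IsWalk gs gr E₁ x z (l₁ ++ l₂) := by
  induction l₁ generalizing x with
  | nil => rwa [isWalk_nil_iff.mp h₁]
  | cons f t ih =>
    rw [isWalk_cons] at h₁
    rw [List.cons_append, isWalk_cons]
    exact ⟨h₁.1, h₁.2.1, ih h₁.2.2⟩

lemma IsWalk.reach {x y : V} {es : List E} (h : IsWalk gs gr E₁ x y es) :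
    Relation.ReflTransGen (GraphStep gs gr E₁) x y := by
  induction es generalizing x with
  | nil => rw [isWalk_nil_iff.mp h]
  | cons f t ih =>
    rw [isWalk_cons] at h
    exact Relation.ReflTransGen.head ⟨f, h.1, h.2.1, rfl⟩ (ih h.2.2)

lemma exists_walk_of_reach {x y : V} (h : Relation.ReflTransGen (GraphStep gs gr E₁) x y) :
    ∃ es, IsWalk gs gr E₁ x y es := by
  induction h using Relation.ReflTransGen.head_induction_on with
  | refl => exact ⟨[], isWalk_nil⟩
  | head hs _ ih =>
    obtain ⟨e, he, hgs, hgr⟩ := hs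
    obtain ⟨es, hw⟩ := ih
    exact ⟨e :: es, isWalk_cons.mpr ⟨he, hgs, hgr ▸ hw⟩⟩

lemma IsWalk.mem_reach {x y : V} {es : List E} (h : IsWalk gs gr E₁ x y es) {e : E}
    (he : e ∈ es) :
    Relation.ReflTransGen (GraphStep gs gr E₁) x (gs e) ∧
    Relation.ReflTransGen (GraphStep gs gr E₁) (gs e) y ∧
    Relation.ReflTransGen (GraphStep gs gr E₁) (gr e) y := by
  induction es generalizing x with
  | nil => simp at he
  | cons f t ih =>
    rw [isWalk_cons] at h
    obtain ⟨hE, hx, hw⟩ := h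
    subst hx
    rcases List.mem_cons.mp he with rfl | he
    · exact ⟨Relation.ReflTransGen.refl,
        Relation.ReflTransGen.head ⟨e, hE, rfl, rfl⟩ hw.reach, hw.reach⟩
    · obtain ⟨h1, h2, h3⟩ := ih hw he
      exact ⟨Relation.ReflTransGen.head ⟨f, hE, rfl, rfl⟩ h1, h2, h3⟩

lemma isCycleAt_iff_walk {v : V} {es : List E} :
    IsCycleAt gs gr E₁ v es ↔ es ≠ [] ∧ IsWalk gs gr E₁ v v es := by
  unfold IsCycleAt IsWalk
  constructor
  · rintro ⟨hne, hm, hc, hh, hl⟩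
    exact ⟨hne, hm, hc, hh, hl, fun h => absurd h hne⟩
  · rintro ⟨hne, hm, hc, hh, hl, -⟩
    exact ⟨hne, hm, hc, hh, hl⟩

lemma IsWalk.of_mem {E₂ : Set E} {x y : V} {es : List E} (h : IsWalk gs gr E₁ x y es)
    (hm : ∀ e ∈ es, e ∈ E₂) : IsWalk gs gr E₂ x y es :=
  ⟨hm, h.2.1, h.2.2.1, h.2.2.2.1, h.2.2.2.2⟩

lemma IsCycleAt.of_mem {E₂ : Set E} {v : V} {es : List E} (h : IsCycleAt gs gr E₁ v es)
    (hm : ∀ e ∈ es, e ∈ E₂) : IsCycleAt gs gr E₂ v es :=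
  ⟨h.1, hm, h.2.2.1, h.2.2.2.1, h.2.2.2.2⟩

lemma IsFirstReturn.of_mem {E₂ : Set E} {v : V} {es : List E}
    (h : IsFirstReturn gs gr E₁ v es) (hm : ∀ e ∈ es, e ∈ E₂) :
    IsFirstReturn gs gr E₂ v es :=
  ⟨h.1.of_mem hm, h.2⟩

end Walks

section Trunc

variable {gs gr : E → V} {E₁ : Set E}

lemma take_head? {α : Type*} (l : List α) (i : ℕ) (hi : 1 ≤ i) :
    (l.take i).head? = l.head? := by
  cases l with
  | nil => simp
  | cons a t =>
    cases i with
    | zero => omega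
    | succ i' => simp

lemma IsWalk.take_walk {x y : V} {es : List E} (h : IsWalk gs gr E₁ x y es) :
    ∀ (i : ℕ) (hi : i < es.length), IsWalk gs gr E₁ x (gs (es.get ⟨i, hi⟩)) (es.take i) := by
  induction es generalizing x with
  | nil => intro i hi; simp at hi
  | cons f t ih =>
    rw [isWalk_cons] at h
    obtain ⟨hE, hx, hw⟩ := h
    intro i hi
    cases i with
    | zero => simpa [isWalk_nil_iff] using hx.symm
    | succ i =>
      rw [List.take_succ_cons, isWalk_cons]
      exact ⟨hE, hx, ih hw i (by simpa using hi)⟩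

lemma IsWalk.drop_walk {x y : V} {es : List E} (h : IsWalk gs gr E₁ x y es) :
    ∀ (i : ℕ) (hi : i < es.length), IsWalk gs gr E₁ (gs (es.get ⟨i, hi⟩)) y (es.drop i) := by
  induction es generalizing x with
  | nil => intro i hi; simp at hi
  | cons f t ih =>
    rw [isWalk_cons] at h
    obtain ⟨hE, hx, hw⟩ := h
    intro i hi
    cases i with
    | zero =>
      simp only [List.get_cons_zero, List.drop_zero]
      exact isWalk_cons.mpr ⟨hE, rfl, hw⟩
    | succ i => exact ih hw i (by simpa using hi)

lemma IsWalk.drop_succ_walk {x y : V} {es : List E} (h : IsWalk gs gr E₁ x y es) :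
    ∀ (i : ℕ) (hi : i < es.length), IsWalk gs gr E₁ (gr (es.get ⟨i, hi⟩)) y (es.drop (i+1)) := by
  induction es generalizing x with
  | nil => intro i hi; simp at hi
  | cons f t ih =>
    rw [isWalk_cons] at h
    obtain ⟨hE, hx, hw⟩ := h
    intro i hi
    cases i with
    | zero =>
      simp only [List.get_cons_zero, List.drop_succ_cons, List.drop_zero]
      exact hw
    | succ i => exact ih hw i (by simpa using hi)

lemma IsWalk.trim {x y : V} : ∀ (n : ℕ) (es : List E), es.length ≤ n →
    IsWalk gs gr E₁ x y es →
    ∃ s, IsWalk gs gr E₁ x y s ∧ ∀ (j : ℕ) (hj : j < s.length), 1 ≤ j →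
      gs (s.get ⟨j, hj⟩) ≠ x := by
  intro n
  induction n with
  | zero =>
    intro es hlen h
    refine ⟨es, h, ?_⟩
    intro j hj
    omega
  | succ n ih =>
    intro es hlen h
    by_cases hex : ∃ (j : ℕ) (hj : j < es.length), 1 ≤ j ∧ gs (es.get ⟨j, hj⟩) = x
    · obtain ⟨j, hj, hj1, hjx⟩ := hex
      have hw' : IsWalk gs gr E₁ x y (es.drop j) := hjx ▸ h.drop_walk j hj
      refine ih (es.drop j) ?_ hw'
      rw [List.length_drop]
      omega
    · push_neg at hex
      exact ⟨es, h, fun j hj h1 => hex j hj h1⟩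

lemma exists_firstReturn_trunc {v : V} {es : List E} (hw : IsWalk gs gr E₁ v v es)
    (hne : es ≠ []) :
    ∃ i, 1 ≤ i ∧ i ≤ es.length ∧
      (i = es.length ∨ ∃ h : i < es.length, gs (es.get ⟨i, h⟩) = v) ∧
      IsFirstReturn gs gr E₁ v (es.take i) := by
  classical
  have hlen : 1 ≤ es.length := List.length_pos_iff.mpr hne
  have hP : ∃ i, 1 ≤ i ∧ (i = es.length ∨ ∃ h : i < es.length, gs (es.get ⟨i, h⟩) = v) :=
    ⟨es.length, hlen, Or.inl rfl⟩
  obtain ⟨i, ⟨hi1, hidis⟩, hmin'⟩ :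
      ∃ i, (1 ≤ i ∧ (i = es.length ∨ ∃ h : i < es.length, gs (es.get ⟨i, h⟩) = v)) ∧
        ∀ m < i, ¬(1 ≤ m ∧ (m = es.length ∨ ∃ h : m < es.length, gs (es.get ⟨m, h⟩) = v)) :=
    ⟨Nat.find hP, Nat.find_spec hP, fun m hm => Nat.find_min hP hm⟩
  have hile : i ≤ es.length := by
    rcases hidis with h | ⟨h, -⟩ <;> omega
  have hlt : (es.take i).length = i := by
    rw [List.length_take]; omega
  have hmin : ∀ (j : ℕ) (hj : j < es.length), 1 ≤ j → j < i → gs (es.get ⟨j, hj⟩) ≠ v := by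
    intro j hj h1 hji
    have := hmin' j hji
    push_neg at this
    obtain ⟨-, hkey⟩ := this h1
    exact hkey hj
  refine ⟨i, hi1, hile, hidis, ⟨⟨?_, ?_, ?_, ?_, ?_⟩, ?_⟩⟩
  · intro h
    rw [← List.length_eq_zero_iff, hlt] at h
    omega
  · exact fun e he => hw.1 e ((List.take_prefix i es).subset he)
  · exact hw.2.1.take i
  · rw [take_head? es i hi1]
    exact hw.2.2.1
  · -- last
    intro l hl
    rw [List.getLast?_eq_getElem?, hlt, List.getElem?_take, if_pos (by omega : i - 1 < i),
      List.getElem?_eq_getElem (by omega : i - 1 < es.length)] at hl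
    simp only [Option.mem_def, Option.some.injEq] at hl
    subst hl
    rcases hidis with heq | ⟨h, hv⟩
    · subst heq
      have hlast := hw.2.2.2.1
      rw [List.getLast?_eq_getElem?,
        List.getElem?_eq_getElem (by omega : es.length - 1 < es.length)] at hlast
      exact hlast _ rfl
    · have hch : gr (es.get ⟨i - 1, by omega⟩) = gs (es.get ⟨i - 1 + 1, by omega⟩) :=
        (List.isChain_iff_getElem.mp hw.2.1) (i-1) (by omega)
      show gr (es.get ⟨i - 1, by omega⟩) = v
      rw [hch]
      have hii : i - 1 + 1 = i := by omega
      simp only [hii]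
      exact hv
  · -- first return indices
    intro j hj h1
    have hj' : j < i := by rwa [hlt] at hj
    have hjlen : j < es.length := by omega
    have hgeq : (es.take i).get ⟨j, hj⟩ = es.get ⟨j, hjlen⟩ := by
      simp [List.get_eq_getElem, List.getElem_take]
    rw [hgeq]
    exact hmin j hjlen h1 hj'

end Trunc

section Branch

variable {gs gr : E → V} {E₁ : Set E}

lemma two_firstReturns_of_branch {v : V} {a b : E} {s ra rb : List E}
    (hwa : IsWalk gs gr E₁ v v (s ++ a :: ra)) (hwb : IsWalk gs gr E₁ v v (s ++ b :: rb))
    (hab : a ≠ b) (hba : gs b = gs a)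
    (hs : ∀ (j : ℕ) (hj : j < s.length), 1 ≤ j → gs (s.get ⟨j, hj⟩) ≠ v)
    (hsa : gs a ≠ v ∨ s = []) :
    ∃ Fa Fb, IsFirstReturn gs gr E₁ v Fa ∧ IsFirstReturn gs gr E₁ v Fb ∧ Fa ≠ Fb := by
  obtain ⟨ia, hia1, hiale, hiadis, hFa⟩ := exists_firstReturn_trunc hwa (by simp)
  obtain ⟨ib, hib1, hible, hibdis, hFb⟩ := exists_firstReturn_trunc hwb (by simp)
  have key : ∀ (c : E) (rc : List E), gs c = gs a → ∀ i, 1 ≤ i →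
      (i = (s ++ c :: rc).length ∨
        ∃ h : i < (s ++ c :: rc).length, gs ((s ++ c :: rc).get ⟨i, h⟩) = v) →
      s.length < i := by
    intro c rc hc i h1 hdis
    by_contra hle
    push_neg at hle
    rcases hdis with heq | ⟨h, hv⟩
    · rw [List.length_append, List.length_cons] at heq
      omega
    · rcases lt_or_eq_of_le hle with hlt | heqs
      · have hgeq : (s ++ c :: rc).get ⟨i, h⟩ = s.get ⟨i, hlt⟩ := by
          simp [List.get_eq_getElem, List.getElem_append_left hlt]
        exact hs i hlt h1 (hgeq ▸ hv)
      · have hgeq : (s ++ c :: rc).get ⟨i, h⟩ = c := by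
          subst heqs
          simp [List.get_eq_getElem, List.getElem_append_right (le_refl s.length)]
        rcases hsa with hnev | hnil
        · rw [hgeq, hc] at hv
          exact hnev hv
        · subst hnil
          simp at heqs
          omega
  have hsa' : s.length < ia := key a ra rfl ia hia1 hiadis
  have hsb' : s.length < ib := key b rb hba ib hib1 hibdis
  have hga : (List.take ia (s ++ a :: ra))[s.length]? = some a := by
    rw [List.getElem?_take, if_pos hsa',
      List.getElem?_eq_getElem (by rw [List.length_append, List.length_cons]; omega)]
    rw [List.getElem_append_right (le_refl s.length)]
    simp
  have hgb : (List.take ib (s ++ b :: rb))[s.length]? = some b := by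
    rw [List.getElem?_take, if_pos hsb',
      List.getElem?_eq_getElem (by rw [List.length_append, List.length_cons]; omega)]
    rw [List.getElem_append_right (le_refl s.length)]
    simp
  refine ⟨_, _, hFa, hFb, ?_⟩
  intro heq
  rw [heq, hgb] at hga
  exact hab (Option.some.inj hga).symm

lemma diverge {v : V} {α β : List E} (hα : IsFirstReturn gs gr E₁ v α)
    (hβ : IsFirstReturn gs gr E₁ v β) (hne : α ≠ β) :
    ∃ (i : ℕ) (ha : i < α.length) (hb : i < β.length),
      α.get ⟨i, ha⟩ ≠ β.get ⟨i, hb⟩ ∧ gs (α.get ⟨i, ha⟩) = gs (β.get ⟨i, hb⟩) := by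
  classical
  have hmain : ∃ n : ℕ, α[n]? ≠ β[n]? := by
    by_contra hc
    push_neg at hc
    exact hne (List.ext_getElem? hc)
  obtain ⟨i, hi, hmin⟩ : ∃ i : ℕ, α[i]? ≠ β[i]? ∧ ∀ j < i, α[j]? = β[j]? :=
    ⟨Nat.find hmain, Nat.find_spec hmain, fun j hj => not_not.mp (Nat.find_min hmain hj)⟩
  have noprefix : ∀ (γ δ : List E), IsFirstReturn gs gr E₁ v γ → IsFirstReturn gs gr E₁ v δ →
      γ.length < δ.length → (∀ j < γ.length, γ[j]? = δ[j]?) → False := by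
    intro γ δ hγ hδ hlen hag
    have hl1 : 1 ≤ γ.length := List.length_pos_iff.mpr hγ.1.1
    have hch : gr (δ.get ⟨γ.length - 1, by omega⟩) = gs (δ.get ⟨γ.length - 1 + 1, by omega⟩) :=
      (List.isChain_iff_getElem.mp hδ.1.2.2.1) (γ.length - 1) (by omega)
    have hgag : δ.get ⟨γ.length - 1, by omega⟩ = γ.get ⟨γ.length - 1, by omega⟩ := by
      have h2 := hag (γ.length - 1) (by omega)
      rw [List.getElem?_eq_getElem (by omega : γ.length - 1 < γ.length),
        List.getElem?_eq_getElem (by omega : γ.length - 1 < δ.length)] at h2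
      simpa [List.get_eq_getElem] using h2.symm
    have hgrv : gr (γ.get ⟨γ.length - 1, by omega⟩) = v := by
      have hlast := hγ.1.2.2.2.2
      rw [List.getLast?_eq_getElem?,
        List.getElem?_eq_getElem (by omega : γ.length - 1 < γ.length)] at hlast
      exact hlast _ rfl
    have hgsv : gs (δ.get ⟨γ.length - 1 + 1, by omega⟩) = v := by
      rw [← hch, hgag, hgrv]
    exact hδ.2 (γ.length - 1 + 1) (by omega) (by omega) hgsv
  have hboth : i < α.length ∧ i < β.length := by
    rcases Nat.lt_or_ge i α.length with h1 | h1
    · rcases Nat.lt_or_ge i β.length with h2 | h2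
      · exact ⟨h1, h2⟩
      · exact absurd (fun j hj => (hmin j (lt_of_lt_of_le hj h2)).symm)
          (fun hag => noprefix β α hβ hα (lt_of_le_of_lt h2 h1) hag)
    · rcases Nat.lt_or_ge i β.length with h2 | h2
      · exact absurd (fun j hj => hmin j (lt_of_lt_of_le hj h1))
          (fun hag => noprefix α β hα hβ (lt_of_le_of_lt h1 h2) hag)
      · exact absurd (by rw [List.getElem?_eq_none h1, List.getElem?_eq_none h2]) hi
  obtain ⟨ha, hb⟩ := hboth
  refine ⟨i, ha, hb, ?_, ?_⟩
  · intro h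
    apply hi
    rw [List.getElem?_eq_getElem ha, List.getElem?_eq_getElem hb]
    simpa [List.get_eq_getElem] using h
  · cases i with
    | zero =>
      have h1 := hα.1.2.2.2.1
      have h2 := hβ.1.2.2.2.1
      rw [List.head?_eq_getElem?, List.getElem?_eq_getElem ha] at h1
      rw [List.head?_eq_getElem?, List.getElem?_eq_getElem hb] at h2
      rw [show (α.get ⟨0, ha⟩ : E) = α[0] from rfl, show (β.get ⟨0, hb⟩ : E) = β[0] from rfl,
        h1 _ rfl, h2 _ rfl]
    | succ k =>
      have hcha : gr (α.get ⟨k, by omega⟩) = gs (α.get ⟨k + 1, ha⟩) :=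
        (List.isChain_iff_getElem.mp hα.1.2.2.1) k (by omega)
      have hchb : gr (β.get ⟨k, by omega⟩) = gs (β.get ⟨k + 1, hb⟩) :=
        (List.isChain_iff_getElem.mp hβ.1.2.2.1) k (by omega)
      have hkeq : α.get ⟨k, by omega⟩ = β.get ⟨k, by omega⟩ := by
        have h2 := hmin k (by omega)
        rw [List.getElem?_eq_getElem (by omega : k < α.length),
          List.getElem?_eq_getElem (by omega : k < β.length)] at h2
        simpa [List.get_eq_getElem] using h2
      rw [← hcha, ← hchb, hkeq]
  
lemma transfer_two_firstReturns {v v' : V} {α β : List E}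
    (hα : IsFirstReturn gs gr E₁ v' α) (hβ : IsFirstReturn gs gr E₁ v' β) (hne : α ≠ β)
    (hvv' : Relation.ReflTransGen (GraphStep gs gr E₁) v v')
    (hv'v : Relation.ReflTransGen (GraphStep gs gr E₁) v' v) :
    ∃ Fa Fb, IsFirstReturn gs gr E₁ v Fa ∧ IsFirstReturn gs gr E₁ v Fb ∧ Fa ≠ Fb := by
  obtain ⟨i, ha, hb, hab, hgs⟩ := diverge hα hβ hne
  obtain ⟨q0, hq0⟩ := exists_walk_of_reach hvv'
  obtain ⟨q0', hq0'⟩ := exists_walk_of_reach hv'v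
  have hαw : IsWalk gs gr E₁ v' v' α := (isCycleAt_iff_walk.mp hα.1).2
  have hβw : IsWalk gs gr E₁ v' v' β := (isCycleAt_iff_walk.mp hβ.1).2
  have hra : IsWalk gs gr E₁ (gr (α.get ⟨i, ha⟩)) v (α.drop (i+1) ++ q0') :=
    (hαw.drop_succ_walk i ha).append hq0'
  have hrb : IsWalk gs gr E₁ (gr (β.get ⟨i, hb⟩)) v (β.drop (i+1) ++ q0') :=
    (hβw.drop_succ_walk i hb).append hq0'
  have haE : α.get ⟨i, ha⟩ ∈ E₁ := hα.1.2.1 _ (List.get_mem α ⟨i, ha⟩)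
  have hbE : β.get ⟨i, hb⟩ ∈ E₁ := hβ.1.2.1 _ (List.get_mem β ⟨i, hb⟩)
  by_cases hv : gs (α.get ⟨i, ha⟩) = v
  · have hWa : IsWalk gs gr E₁ v v (α.get ⟨i, ha⟩ :: (α.drop (i+1) ++ q0')) :=
      isWalk_cons.mpr ⟨haE, hv, hra⟩
    have hWb : IsWalk gs gr E₁ v v (β.get ⟨i, hb⟩ :: (β.drop (i+1) ++ q0')) :=
      isWalk_cons.mpr ⟨hbE, by rw [← hgs]; exact hv, hrb⟩
    exact two_firstReturns_of_branch (s := []) hWa hWb hab hgs.symm (by simp) (Or.inr rfl)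
  · have hq1 : IsWalk gs gr E₁ v (gs (α.get ⟨i, ha⟩)) (q0 ++ α.take i) :=
      hq0.append (hαw.take_walk i ha)
    obtain ⟨s, hsw, hsprop⟩ := IsWalk.trim (q0 ++ α.take i).length (q0 ++ α.take i) le_rfl hq1
    have hWa : IsWalk gs gr E₁ v v (s ++ α.get ⟨i, ha⟩ :: (α.drop (i+1) ++ q0')) :=
      hsw.append (isWalk_cons.mpr ⟨haE, rfl, hra⟩)
    have hWb : IsWalk gs gr E₁ v v (s ++ β.get ⟨i, hb⟩ :: (β.drop (i+1) ++ q0')) :=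
      hsw.append (isWalk_cons.mpr ⟨hbE, hgs.symm, hrb⟩)
    exact two_firstReturns_of_branch hWa hWb hab hgs.symm hsprop (Or.inl hv)

end Branch

/-- Let `(V, E, gs, gr)` be a directed graph satisfying
Condition (K) in which every vertex connects to a cycle.  Then for every
finite set `V₀` of vertices and finite set `F` of edges there is a finite
subgraph `(G₀, G₁)` of `E` containing `V₀` and `F` such that every vertex
of the subgraph connects to a cycle within the subgraph, and the subgraph
satisfies Condition (K). -/
theorem exists_finite_subgraph_condK (gs gr : E → V)
    (hK : CondK gs gr (Set.univ : Set E))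
    (hcc : ∀ v : V, ConnectsToCycleIn gs gr (Set.univ : Set E) v)
    (V₀ : Finset V) (F : Finset E) :
    ∃ (G₀ : Finset V) (G₁ : Finset E),
      (↑V₀ : Set V) ⊆ ↑G₀ ∧ (↑F : Set E) ⊆ ↑G₁ ∧
      (∀ e ∈ G₁, gs e ∈ G₀ ∧ gr e ∈ G₀) ∧
      (∀ v ∈ G₀, ConnectsToCycleIn gs gr (↑G₁ : Set E) v) ∧
      CondK gs gr (↑G₁ : Set E) := by
  classical
  have hwc : ∀ u : V, ∃ (w : V) (p : List E) (c : List E),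
      IsWalk gs gr Set.univ u w p ∧ IsCycleAt gs gr Set.univ w c := by
    intro u
    obtain ⟨w, c, hr, hc⟩ := hcc u
    obtain ⟨p, hp⟩ := exists_walk_of_reach hr
    exact ⟨w, p, c, hp, hc⟩
  choose wf pf cf hpf hcf using hwc
  set B0 : Finset V := V₀ ∪ F.image gs ∪ F.image gr with hB0def
  set G1' : Finset E := F ∪ B0.biUnion (fun u => (pf u).toFinset ∪ (cf u).toFinset)
    with hG1'def
  set G0' : Finset V := G1'.image gs ∪ G1'.image gr with hG0'def
  set βf : V → List E := fun v' =>
    if h : ∃ es, IsFirstReturn gs gr (↑G1' : Set E) v' es then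
      Classical.choose
        (hK v' _ ((Classical.choose_spec h).of_mem (fun e _ => Set.mem_univ e)))
    else [] with hβfdef
  have hβspec : ∀ (v' : V) (h : ∃ es, IsFirstReturn gs gr (↑G1' : Set E) v' es),
      IsFirstReturn gs gr Set.univ v' (βf v') ∧ βf v' ≠ Classical.choose h := by
    intro v' h
    simp only [hβfdef]
    rw [dif_pos h]
    exact Classical.choose_spec
      (hK v' _ ((Classical.choose_spec h).of_mem (fun e _ => Set.mem_univ e)))
  have hβnil : ∀ v' : V, ¬(∃ es, IsFirstReturn gs gr (↑G1' : Set E) v' es) → βf v' = [] := by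
    intro v' h
    simp only [hβfdef]
    rw [dif_neg h]
  set G1 : Finset E := G1' ∪ G0'.biUnion (fun v' => (βf v').toFinset) with hG1def
  set G0 : Finset V := V₀ ∪ G1.image gs ∪ G1.image gr with hG0def
  have hG1'G1 : G1' ⊆ G1 := Finset.subset_union_left
  have hpf_mem : ∀ u ∈ B0, ∀ e ∈ pf u, e ∈ G1 := by
    intro u hu e he
    apply hG1'G1
    rw [hG1'def]
    exact Finset.mem_union_right _ (Finset.mem_biUnion.mpr
      ⟨u, hu, Finset.mem_union_left _ (List.mem_toFinset.mpr he)⟩)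
  have hcf_mem : ∀ u ∈ B0, ∀ e ∈ cf u, e ∈ G1 := by
    intro u hu e he
    apply hG1'G1
    rw [hG1'def]
    exact Finset.mem_union_right _ (Finset.mem_biUnion.mpr
      ⟨u, hu, Finset.mem_union_right _ (List.mem_toFinset.mpr he)⟩)
  have hβ_mem : ∀ v' ∈ G0', ∀ e ∈ βf v', e ∈ G1 := by
    intro v' hv' e he
    rw [hG1def]
    exact Finset.mem_union_right _ (Finset.mem_biUnion.mpr
      ⟨v', hv', List.mem_toFinset.mpr he⟩)
  have hV₀B0 : V₀ ⊆ B0 := by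
    rw [hB0def]
    exact Finset.subset_union_left.trans Finset.subset_union_left
  -- connectivity helpers
  have hB0connect : ∀ u ∈ B0, ConnectsToCycleIn gs gr (↑G1 : Set E) u := by
    intro u hu
    exact ⟨wf u, cf u,
      ((hpf u).of_mem (fun e he => Finset.mem_coe.mpr (hpf_mem u hu e he))).reach,
      (hcf u).of_mem (fun e he => Finset.mem_coe.mpr (hcf_mem u hu e he))⟩
  have hβG1fr : ∀ v' ∈ G0', ∀ e ∈ βf v', IsFirstReturn gs gr (↑G1 : Set E) v' (βf v') := by
    intro v' hv' e heβ
    have hex : ∃ es, IsFirstReturn gs gr (↑G1' : Set E) v' es := by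
      by_contra hcon
      rw [hβnil v' hcon] at heβ
      simp at heβ
    exact (hβspec v' hex).1.of_mem
      (fun e' he' => Finset.mem_coe.mpr (hβ_mem v' hv' e' he'))
  have hedge_connect : ∀ e ∈ G1,
      ConnectsToCycleIn gs gr (↑G1 : Set E) (gs e) ∧
      ConnectsToCycleIn gs gr (↑G1 : Set E) (gr e) := by
    intro e he
    rw [hG1def, Finset.mem_union] at he
    rcases he with he' | hβe
    · rw [hG1'def, Finset.mem_union] at he'
      rcases he' with heF | heB
      · constructor
        · refine hB0connect _ ?_
          rw [hB0def]
          exact Finset.mem_union_left _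
            (Finset.mem_union_right _ (Finset.mem_image_of_mem gs heF))
        · refine hB0connect _ ?_
          rw [hB0def]
          exact Finset.mem_union_right _ (Finset.mem_image_of_mem gr heF)
      · obtain ⟨u, hu, hor⟩ := Finset.mem_biUnion.mp heB
        rw [Finset.mem_union] at hor
        have hcyc : IsCycleAt gs gr (↑G1 : Set E) (wf u) (cf u) :=
          (hcf u).of_mem (fun e' he' => Finset.mem_coe.mpr (hcf_mem u hu e' he'))
        rcases hor with hp | hc
        · have hep : e ∈ pf u := List.mem_toFinset.mp hp
          have hw : IsWalk gs gr (↑G1 : Set E) u (wf u) (pf u) :=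
            (hpf u).of_mem (fun e' he' => Finset.mem_coe.mpr (hpf_mem u hu e' he'))
          obtain ⟨-, h2, h3⟩ := hw.mem_reach hep
          exact ⟨⟨wf u, cf u, h2, hcyc⟩, ⟨wf u, cf u, h3, hcyc⟩⟩
        · have hec : e ∈ cf u := List.mem_toFinset.mp hc
          have hw : IsWalk gs gr (↑G1 : Set E) (wf u) (wf u) (cf u) :=
            (isCycleAt_iff_walk.mp hcyc).2
          obtain ⟨-, h2, h3⟩ := hw.mem_reach hec
          exact ⟨⟨wf u, cf u, h2, hcyc⟩, ⟨wf u, cf u, h3, hcyc⟩⟩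
    · obtain ⟨v', hv', hm⟩ := Finset.mem_biUnion.mp hβe
      have heβ : e ∈ βf v' := List.mem_toFinset.mp hm
      have hfr := hβG1fr v' hv' e heβ
      have hw : IsWalk gs gr (↑G1 : Set E) v' v' (βf v') := (isCycleAt_iff_walk.mp hfr.1).2
      obtain ⟨-, h2, h3⟩ := hw.mem_reach heβ
      exact ⟨⟨v', βf v', h2, hfr.1⟩, ⟨v', βf v', h3, hfr.1⟩⟩
  refine ⟨G0, G1, ?_, ?_, ?_, ?_, ?_⟩
  · intro x hx
    rw [Finset.mem_coe] at hx ⊢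
    rw [hG0def]
    exact Finset.mem_union_left _ (Finset.mem_union_left _ hx)
  · intro e he
    rw [Finset.mem_coe] at he ⊢
    apply hG1'G1
    rw [hG1'def]
    exact Finset.mem_union_left _ he
  · intro e he
    constructor
    · rw [hG0def]
      exact Finset.mem_union_left _
        (Finset.mem_union_right _ (Finset.mem_image_of_mem gs he))
    · rw [hG0def]
      exact Finset.mem_union_right _ (Finset.mem_image_of_mem gr he)
  · intro v hv
    rw [hG0def, Finset.mem_union, Finset.mem_union] at hv
    rcases hv with (hv | hv) | hv
    · exact hB0connect v (hV₀B0 hv)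
    · obtain ⟨e, he, rfl⟩ := Finset.mem_image.mp hv
      exact (hedge_connect e he).1
    · obtain ⟨e, he, rfl⟩ := Finset.mem_image.mp hv
      exact (hedge_connect e he).2
  · -- Condition (K)
    intro v es hfr
    have hesne : es ≠ [] := hfr.1.1
    have hesw : IsWalk gs gr (↑G1 : Set E) v v es := (isCycleAt_iff_walk.mp hfr.1).2
    have main : ∃ v', Relation.ReflTransGen (GraphStep gs gr (↑G1 : Set E)) v v' ∧
        Relation.ReflTransGen (GraphStep gs gr (↑G1 : Set E)) v' v ∧
        (∃ es', IsFirstReturn gs gr (↑G1' : Set E) v' es') ∧ v' ∈ G0' := by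
      by_cases hall : ∀ e ∈ es, e ∈ G1'
      · refine ⟨v, Relation.ReflTransGen.refl, Relation.ReflTransGen.refl,
          ⟨es, hfr.of_mem (fun e he => Finset.mem_coe.mpr (hall e he))⟩, ?_⟩
        obtain ⟨e0, t0, rfl⟩ := List.exists_cons_of_ne_nil hesne
        have hv0 : gs e0 = v := hfr.1.2.2.2.1 e0 rfl
        rw [hG0'def]
        exact Finset.mem_union_left _
          (hv0 ▸ Finset.mem_image_of_mem gs (hall e0 (by simp)))
      · push_neg at hall
        obtain ⟨e, hees, heG1'⟩ := hall
        have heG1 : e ∈ G1 := Finset.mem_coe.mp (hesw.1 e hees)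
        rw [hG1def, Finset.mem_union] at heG1
        rcases heG1 with h' | hβe
        · exact absurd h' heG1'
        · obtain ⟨v', hv', hm⟩ := Finset.mem_biUnion.mp hβe
          have heβ : e ∈ βf v' := List.mem_toFinset.mp hm
          have hex : ∃ es', IsFirstReturn gs gr (↑G1' : Set E) v' es' := by
            by_contra hcon
            rw [hβnil v' hcon] at heβ
            simp at heβ
          have hfr' := hβG1fr v' hv' e heβ
          have hβw : IsWalk gs gr (↑G1 : Set E) v' v' (βf v') :=
            (isCycleAt_iff_walk.mp hfr'.1).2
          obtain ⟨hv'gs, hgsv', -⟩ := hβw.mem_reach heβ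
          obtain ⟨hvgs, hgsv, -⟩ := hesw.mem_reach hees
          exact ⟨v', hvgs.trans hgsv', hv'gs.trans hgsv, hex, hv'⟩
    obtain ⟨v', hvv', hv'v, hex, hv'G0'⟩ := main
    have hα : IsFirstReturn gs gr (↑G1 : Set E) v' (Classical.choose hex) :=
      (Classical.choose_spec hex).of_mem
        (fun e he => Finset.mem_coe.mpr
          (hG1'G1 (Finset.mem_coe.mp ((Classical.choose_spec hex).1.2.1 e he))))
    obtain ⟨hβu, hβneq⟩ := hβspec v' hex
    have hβ : IsFirstReturn gs gr (↑G1 : Set E) v' (βf v') :=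
      hβu.of_mem (fun e he => Finset.mem_coe.mpr (hβ_mem v' hv'G0' e he))
    obtain ⟨Fa, Fb, hFa, hFb, hFab⟩ := transfer_two_firstReturns hβ hα hβneq hvv' hv'v
    by_cases hcase : Fa = es
    · exact ⟨Fb, hFb, fun h => hFab (hcase.trans h.symm)⟩
    · exact ⟨Fa, hFa, hcase⟩
end

section
/- Let E be a row-finite directed graph (i.e. s⁻¹(v) is finite for every vertex v). Let H ⊆ E⁰ be a set of vertices such that no cycle of E has all of the vertices it visits contained in E⁰ ∖ H, and let X ⊆ E⁰ be finite. Then the set of paths { e₁e₂⋯e_k ∈ E* : k ≥ 1, s(eᵢ) ∈ X ∖ H for all 1 ≤ i ≤ k, and r(e_k) ∈ H } is finite. -/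
/- A directed graph is presented by a vertex type `V`, an edge type `E`, and
source/range maps `gs gr : E → V`.  A path of length `n ≥ 1` is a list
`[e₁, …, eₙ]` of edges satisfying the chain condition `gr eᵢ = gs eᵢ₊₁`;
its source is `gs e₁` and its range is `gr eₙ`.  A cycle is a nonempty path
whose range equals its source; the vertices it visits are the sources of its
edges (equivalently, all sources and ranges of its edges). -/

variable {V E : Type*}

/-- `es` is a cycle: a nonempty path whose range equals its source. -/
def IsCycleList (gs gr : E → V) (es : List E) : Prop :=
  es ≠ [] ∧ IsEdgeChain gs gr es ∧
    ∀ e ∈ es.getLast?, ∀ f ∈ es.head?, gr e = gs f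

/-- Let `(V, E, gs, gr)` be a row-finite directed graph
(`hrow`).  Let `H ⊆ V` be a set of vertices such that no cycle has all the
vertices it visits contained in `V ∖ H` (`hnc`), and let `X ⊆ V` be finite.
Then the set of paths `e₁⋯e_k` (`k ≥ 1`) with `gs eᵢ ∈ X ∖ H` for all `i` and
`gr e_k ∈ H` is finite. -/
theorem finite_paths_into_H (gs gr : E → V)
    (hrow : ∀ v : V, {e : E | gs e = v}.Finite)
    (H : Set V)
    (hnc : ¬ ∃ es : List E, IsCycleList gs gr es ∧ ∀ e ∈ es, gs e ∉ H)
    (X : Set V) (hX : X.Finite) :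
    Set.Finite {es : List E | es ≠ [] ∧ IsEdgeChain gs gr es ∧
      (∀ e ∈ es, gs e ∈ X \ H) ∧ ∀ e ∈ es.getLast?, gr e ∈ H} := by

  classical
  -- the finite set of edges whose source lies in `X`
  have hS : {e : E | gs e ∈ X}.Finite := by
    have : {e : E | gs e ∈ X} = ⋃ v ∈ X, {e : E | gs e = v} := by
      ext e; simp [eq_comm]
    rw [this]
    exact hX.biUnion fun v _ => hrow v
  set n := hX.toFinset.card with hn
  -- every path in our set has nodup sources, hence bounded length
  have key : ∀ es : List E, es ≠ [] → IsEdgeChain gs gr es →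
      (∀ e ∈ es, gs e ∈ X \ H) → es.length ≤ n ∧ ∀ e ∈ es, e ∈ {e : E | gs e ∈ X} := by
    intro es _ hchain hmem
    have hnodup : (es.map gs).Nodup := by
      by_contra hdup
      obtain ⟨x, hx⟩ := List.exists_duplicate_iff_not_nodup.2 hdup
      have hsub : List.Sublist [x, x] (es.map gs) := List.duplicate_iff_sublist.1 hx
      obtain ⟨l'', hl'', hmap⟩ := List.sublist_map_iff.1 hsub
      obtain ⟨e, f, rfl, hef⟩ : ∃ e f, l'' = [e, f] ∧ gs e = gs f := by
        rcases l'' with _ | ⟨e, _ | ⟨f, _ | _⟩⟩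
        · simp at hmap
        · simp at hmap
        · refine ⟨e, f, rfl, ?_⟩
          simp only [List.map_cons, List.map_nil, List.cons.injEq] at hmap
          rw [← hmap.1, hmap.2.1]
        · simp at hmap
      -- decompose es = p ++ e :: q ++ f :: r
      obtain ⟨r₁, r₂, rfl, he1, hf1⟩ := List.cons_sublist_iff.1 hl''
      obtain ⟨s₁, s₂, rfl, hf2, -⟩ := List.cons_sublist_iff.1 hf1
      obtain ⟨p, q, rfl⟩ := List.append_of_mem he1
      obtain ⟨u, w, rfl⟩ := List.append_of_mem hf2
      -- the cycle `e :: (q ++ u)`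
      have hre : p ++ e :: q ++ ((u ++ f :: w) ++ s₂) =
          p ++ ((e :: (q ++ u)) ++ (f :: (w ++ s₂))) := by simp
      have hchain' := hchain
      unfold IsEdgeChain List.Chain' at hchain'
      rw [hre, List.isChain_append, List.isChain_append] at hchain'
      obtain ⟨-, ⟨hc1, -, hlink⟩, -⟩ := hchain'
      refine hnc ⟨e :: (q ++ u), ⟨by simp, hc1, ?_⟩, ?_⟩
      · intro a ha b hb
        have hgLast : gr a = gs f := hlink a ha f (by simp)
        have hb' : b = e := by simpa using hb.symm
        rw [hb', hgLast]; exact hef.symm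
      · intro a ha
        have : a ∈ p ++ e :: q ++ ((u ++ f :: w) ++ s₂) := by
          rw [hre]; simp only [List.mem_append, List.mem_cons] at ha ⊢
          tauto
        exact (hmem a this).2
    have hsubX : (es.map gs).toFinset ⊆ hX.toFinset := by
      intro v hv
      simp only [List.mem_toFinset, List.mem_map] at hv
      obtain ⟨e, he, rfl⟩ := hv
      exact hX.mem_toFinset.2 (hmem e he).1
    have hlen : es.length ≤ n := by
      have := Finset.card_le_card hsubX
      rwa [List.toFinset_card_of_nodup hnodup, List.length_map] at this
    exact ⟨hlen, fun e he => (hmem e he).1⟩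
  -- the ambient finite set of lists
  haveI : Finite {e : E | gs e ∈ X} := hS.to_subtype
  have hbig : {l : List E | l.length ≤ n ∧ ∀ x ∈ l, x ∈ {e : E | gs e ∈ X}}.Finite := by
    have himg : {l : List E | l.length ≤ n ∧ ∀ x ∈ l, x ∈ {e : E | gs e ∈ X}} ⊆
        (fun l : List {e : E | gs e ∈ X} => l.map Subtype.val) ''
          {l : List {e : E | gs e ∈ X} | l.length ≤ n} := by
      rintro l ⟨hlen, hmem⟩
      refine ⟨l.attach.map fun x => ⟨x.1, hmem x.1 x.2⟩, by simpa using hlen, ?_⟩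
      simp [List.map_map]
    exact Set.Finite.subset (Set.Finite.image _ (List.finite_length_le _ n)) himg
  refine hbig.subset ?_
  rintro es ⟨hne, hchain, hmem, -⟩
  exact key es hne hchain hmem
end

section
/- Let B be a unital C*-algebra containing isometries s₁, s₂ (i.e. sᵢ*sᵢ = 1_B) with s₁s₁* + s₂s₂* = 1_B. Let F and G be C*-algebras and let φ : F → B and ψ : G → B be order-zero completely positive contractions. Then the map Φ : F ⊕ G → B defined by Φ(x, y) = s₁ φ(x) s₁* + s₂ ψ(y) s₂* is an order-zero completely positive contraction, and ‖Φ(x, y)‖ = max{‖φ(x)‖, ‖ψ(y)‖} for all (x, y) ∈ F ⊕ G. -/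
/-- An element of a C*-algebra (or of a matrix algebra over one) is positive
iff it is of the form `star b * b`. -/
def IsPositiveElem {X : Type*} [NonUnitalRing X] [StarRing X] (a : X) : Prop :=
  ∃ b, a = star b * b

/-- A (ℂ-)linear map between C*-algebras is completely positive if all its
matrix amplifications map positive elements to positive elements. -/
def IsCPMap {X Y : Type*} [NonUnitalRing X] [StarRing X] [Module ℂ X]
    [NonUnitalRing Y] [StarRing Y] [Module ℂ Y] (f : X →ₗ[ℂ] Y) : Prop :=
  ∀ (n : ℕ) (M : Matrix (Fin n) (Fin n) X),
    IsPositiveElem M → IsPositiveElem (M.map f)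

/-- A map has order zero if it sends pairs of orthogonal positive elements to
orthogonal elements: `f a * f b = 0` whenever `a, b` are positive with
`a * b = 0`. -/
def IsOrderZero {X Y : Type*} [NonUnitalRing X] [StarRing X] [Module ℂ X]
    [NonUnitalRing Y] [StarRing Y] [Module ℂ Y] (f : X →ₗ[ℂ] Y) : Prop :=
  ∀ a b : X, IsPositiveElem a → IsPositiveElem b → a * b = 0 →
    f a * f b = 0

/-- Conjugation `b ↦ s * b * star s` by a fixed element, as a linear map. -/
noncomputable def conjComp {B : Type*} [CStarAlgebra B] (s : B) : B →ₗ[ℂ] B :=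
  (LinearMap.mulRight ℂ (star s)).comp (LinearMap.mulLeft ℂ s)

/-- The map `Φ : F ⊕ G → B`, `Φ(x, y) = s₁ φ(x) s₁* + s₂ ψ(y) s₂*`. -/
noncomputable def PhiMap {B : Type*} [CStarAlgebra B] {F G : Type*}
    [NonUnitalCStarAlgebra F] [NonUnitalCStarAlgebra G]
    (s₁ s₂ : B) (φ : F →ₗ[ℂ] B) (ψ : G →ₗ[ℂ] B) : F × G →ₗ[ℂ] B :=
  (conjComp s₁).comp (φ.comp (LinearMap.fst ℂ F G)) +
    (conjComp s₂).comp (ψ.comp (LinearMap.snd ℂ F G))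

section Helpers

variable {R : Type*} [Ring R] [StarRing R]

lemma conj_mul_conj (S x y : R) (hS : star S * S = 1) :
    (S * x * star S) * (S * y * star S) = S * (x * y) * star S := by
  have h : star S * (S * (y * star S)) = y * star S := by rw [← mul_assoc, hS, one_mul]
  simp only [mul_assoc, h]

lemma conj_mul_conj_zero (S T x y : R) (hST : star S * T = 0) :
    (S * x * star S) * (T * y * star T) = 0 := by
  have h : star S * (T * (y * star T)) = 0 := by rw [← mul_assoc, hST, zero_mul]
  simp only [mul_assoc, h, mul_zero]

lemma star_conj (S x : R) : star (S * x * star S) = S * star x * star S := by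
  simp [star_mul, mul_assoc]

lemma key_sq (S T b₁ b₂ : R) (hS : star S * S = 1) (hT : star T * T = 1)
    (hST : star S * T = 0) (hTS : star T * S = 0) :
    star (S * b₁ * star S + T * b₂ * star T) * (S * b₁ * star S + T * b₂ * star T)
      = S * (star b₁ * b₁) * star S + T * (star b₂ * b₂) * star T := by
  rw [star_add, star_conj, star_conj, add_mul, mul_add, mul_add,
    conj_mul_conj S _ _ hS, conj_mul_conj T _ _ hT,
    conj_mul_conj_zero S T _ _ hST, conj_mul_conj_zero T S _ _ hTS]
  simp

lemma orth_of_isometries (s₁ s₂ : R) (hs₁ : star s₁ * s₁ = 1) (hs₂ : star s₂ * s₂ = 1)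
    (hsum : s₁ * star s₁ + s₂ * star s₂ = 1) : star s₁ * s₂ = 0 := by
  have h : star s₁ * (s₁ * star s₁ + s₂ * star s₂) * s₂ = star s₁ * s₂ := by
    rw [hsum, mul_one]
  have h1 : star s₁ * (s₁ * star s₁) * s₂ = star s₁ * s₂ := by
    rw [← mul_assoc, hs₁, one_mul]
  have h2 : star s₁ * (s₂ * star s₂) * s₂ = star s₁ * s₂ := by
    rw [mul_assoc, mul_assoc, hs₂, mul_one]
  rw [mul_add, add_mul, h1, h2] at h
  exact add_eq_right.mp h

end Helpers

section Main

variable {B : Type*} [CStarAlgebra B] {F G : Type*}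
  [NonUnitalCStarAlgebra F] [NonUnitalCStarAlgebra G]

lemma phiMap_apply (s₁ s₂ : B) (φ : F →ₗ[ℂ] B) (ψ : G →ₗ[ℂ] B) (z : F × G) :
    PhiMap s₁ s₂ φ ψ z = s₁ * φ z.1 * star s₁ + s₂ * ψ z.2 * star s₂ := by
  simp [PhiMap, conjComp, mul_assoc]

lemma map_fst_star_mul {n : ℕ} (N : Matrix (Fin n) (Fin n) (F × G)) :
    (star N * N).map Prod.fst = star (N.map Prod.fst) * N.map Prod.fst := by
  ext i j
  simp only [Matrix.map_apply, Matrix.mul_apply, Matrix.star_eq_conjTranspose,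
    Matrix.conjTranspose_apply]
  rw [show (∑ x : Fin n, star (N x i) * N x j).1
      = (AddMonoidHom.fst F G) (∑ x : Fin n, star (N x i) * N x j) from rfl,
    map_sum]
  simp

lemma map_snd_star_mul {n : ℕ} (N : Matrix (Fin n) (Fin n) (F × G)) :
    (star N * N).map Prod.snd = star (N.map Prod.snd) * N.map Prod.snd := by
  ext i j
  simp only [Matrix.map_apply, Matrix.mul_apply, Matrix.star_eq_conjTranspose,
    Matrix.conjTranspose_apply]
  rw [show (∑ x : Fin n, star (N x i) * N x j).2
      = (AddMonoidHom.snd F G) (∑ x : Fin n, star (N x i) * N x j) from rfl,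
    map_sum]
  simp

lemma diag_star_mul_diag {n : ℕ} (s t : B) (h : star s * t = 1) :
    star (Matrix.diagonal (fun _ : Fin n => s)) * Matrix.diagonal (fun _ : Fin n => t)
      = (1 : Matrix (Fin n) (Fin n) B) := by
  rw [Matrix.star_eq_conjTranspose, Matrix.diagonal_conjTranspose,
    Matrix.diagonal_mul_diagonal]
  simp [h]

lemma diag_star_mul_diag_zero {n : ℕ} (s t : B) (h : star s * t = 0) :
    star (Matrix.diagonal (fun _ : Fin n => s)) * Matrix.diagonal (fun _ : Fin n => t)
      = (0 : Matrix (Fin n) (Fin n) B) := by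
  rw [Matrix.star_eq_conjTranspose, Matrix.diagonal_conjTranspose,
    Matrix.diagonal_mul_diagonal]
  simp [h]

lemma conj_diag_apply {n : ℕ} (s : B) (X : Matrix (Fin n) (Fin n) B) (i j : Fin n) :
    (Matrix.diagonal (fun _ : Fin n => s) * X * star (Matrix.diagonal fun _ : Fin n => s)) i j
      = s * X i j * star s := by
  rw [Matrix.star_eq_conjTranspose, Matrix.diagonal_conjTranspose]
  simp [Matrix.diagonal_mul, Matrix.mul_diagonal]

end Main

lemma assoc_extract {R : Type*} [Ring R] (s t x u v : R) :
    s * (t * x * u) * v = s * t * x * (u * v) := by noncomm_ring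

lemma norm_cutdown {B : Type*} [CStarAlgebra B] (s₁ s₂ : B)
    (hs₁ : star s₁ * s₁ = 1) (hs₂ : star s₂ * s₂ = 1)
    (hsum : s₁ * star s₁ + s₂ * star s₂ = 1) (a b : B) :
    ‖s₁ * a * star s₁ + s₂ * b * star s₂‖ = max ‖a‖ ‖b‖ := by
  have h12 : star s₁ * s₂ = 0 := orth_of_isometries s₁ s₂ hs₁ hs₂ hsum
  have h21 : star s₂ * s₁ = 0 := by simpa [star_mul] using congrArg star h12
  set z := s₁ * a * star s₁ + s₂ * b * star s₂ with hzdef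
  rcases subsingleton_or_nontrivial B with hB | hB
  · have hz0 : ∀ x : B, ‖x‖ = 0 := fun x => by rw [Subsingleton.elim x 0, norm_zero]
    rw [hz0, hz0, hz0]; simp
  · have hns : ∀ s : B, star s * s = 1 → ‖s‖ = 1 := by
      intro s hs
      have h := CStarRing.norm_star_mul_self (x := s)
      rw [hs, CStarRing.norm_one] at h
      nlinarith [norm_nonneg s]
    have hA : star s₁ * z * s₁ = a := by
      rw [hzdef, mul_add, add_mul, assoc_extract, assoc_extract, hs₁, h12, h21]
      simp
    have hBb : star s₂ * z * s₂ = b := by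
      rw [hzdef, mul_add, add_mul, assoc_extract, assoc_extract, hs₂, h12, h21]
      simp
    have low : ∀ (s c : B), star s * s = 1 → star s * z * s = c → ‖c‖ ≤ ‖z‖ := by
      intro s c hs hc
      calc ‖c‖ = ‖star s * z * s‖ := by rw [hc]
        _ ≤ ‖star s * z‖ * ‖s‖ := norm_mul_le _ _
        _ ≤ ‖star s‖ * ‖z‖ * ‖s‖ :=
            mul_le_mul_of_nonneg_right (norm_mul_le _ _) (norm_nonneg _)
        _ = ‖z‖ := by rw [norm_star, hns s hs]; ring
    letI := CStarAlgebra.spectralOrder B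
    haveI := CStarAlgebra.spectralOrderedRing B
    set m : ℝ := max ‖a‖ ‖b‖ with hm
    have hm0 : 0 ≤ m := le_trans (norm_nonneg a) (le_max_left _ _)
    have amono : ∀ r t : ℝ, r ≤ t → algebraMap ℝ B r ≤ algebraMap ℝ B t := by
      intro r t h
      have h0 : (0 : B) ≤ algebraMap ℝ B (t - r) := by
        have hsq : Real.sqrt (t - r) * Real.sqrt (t - r) = t - r :=
          Real.mul_self_sqrt (by linarith)
        have hstar : star (algebraMap ℝ B (Real.sqrt (t - r)))
            = algebraMap ℝ B (Real.sqrt (t - r)) := by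
          rw [Algebra.algebraMap_eq_smul_one, star_smul, star_trivial, star_one]
        have heq : star (algebraMap ℝ B (Real.sqrt (t - r)))
            * algebraMap ℝ B (Real.sqrt (t - r)) = algebraMap ℝ B (t - r) := by
          rw [hstar, ← map_mul, hsq]
        rw [← heq]
        exact star_mul_self_nonneg _
      calc algebraMap ℝ B r = algebraMap ℝ B r + 0 := (add_zero _).symm
        _ ≤ algebraMap ℝ B r + algebraMap ℝ B (t - r) := add_le_add_right h0 _
        _ = algebraMap ℝ B t := by rw [← map_add]; ring_nf
    have hc : star a * a ≤ algebraMap ℝ B (m ^ 2) :=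
      le_trans CStarAlgebra.star_mul_le_algebraMap_norm_sq
        (amono _ _ (pow_le_pow_left₀ (norm_nonneg a) (le_max_left _ _) 2))
    have hd : star b * b ≤ algebraMap ℝ B (m ^ 2) :=
      le_trans CStarAlgebra.star_mul_le_algebraMap_norm_sq
        (amono _ _ (pow_le_pow_left₀ (norm_nonneg b) (le_max_right _ _) 2))
    have conj1 : s₁ * (star a * a) * star s₁ ≤ s₁ * algebraMap ℝ B (m ^ 2) * star s₁ := by
      simpa only [star_star] using star_left_conjugate_le_conjugate hc (star s₁)
    have conj2 : s₂ * (star b * b) * star s₂ ≤ s₂ * algebraMap ℝ B (m ^ 2) * star s₂ := by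
      simpa only [star_star] using star_left_conjugate_le_conjugate hd (star s₂)
    have conjalg : ∀ s : B, s * algebraMap ℝ B (m ^ 2) * star s = (m ^ 2) • (s * star s) := by
      intro s
      rw [Algebra.algebraMap_eq_smul_one, mul_smul_comm, mul_one, smul_mul_assoc]
    have hzz : star z * z = s₁ * (star a * a) * star s₁ + s₂ * (star b * b) * star s₂ :=
      key_sq s₁ s₂ a b hs₁ hs₂ h12 h21
    have hle : star z * z ≤ algebraMap ℝ B (m ^ 2) := by
      rw [hzz]
      calc s₁ * (star a * a) * star s₁ + s₂ * (star b * b) * star s₂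
          ≤ (m ^ 2) • (s₁ * star s₁) + (m ^ 2) • (s₂ * star s₂) := by
            rw [← conjalg, ← conjalg]; exact add_le_add conj1 conj2
        _ = (m ^ 2) • (s₁ * star s₁ + s₂ * star s₂) := (smul_add _ _ _).symm
        _ = algebraMap ℝ B (m ^ 2) := by rw [hsum, Algebra.algebraMap_eq_smul_one]
    have hpos : (0 : B) ≤ star z * z := star_mul_self_nonneg z
    have hnorm : ‖star z * z‖ ≤ m ^ 2 :=
      (CStarAlgebra.norm_le_iff_le_algebraMap _ (by positivity) hpos).mpr hle
    have hsq : ‖z‖ ^ 2 ≤ m ^ 2 := by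
      rw [pow_two, ← CStarRing.norm_star_mul_self]; exact hnorm
    have upper : ‖z‖ ≤ m := by nlinarith [norm_nonneg z]
    exact le_antisymm upper (max_le (low s₁ a hs₁ hA) (low s₂ b hs₂ hBb))

/-- Let `B` be a unital C*-algebra containing isometries
`s₁, s₂` with `s₁ s₁* + s₂ s₂* = 1`.  Let `F`, `G` be C*-algebras and
`φ : F → B`, `ψ : G → B` order-zero CP contractions.  Then the map
`Φ : F ⊕ G → B`, `Φ(x, y) = s₁ φ(x) s₁* + s₂ ψ(y) s₂*`, is an order-zero CP
contraction, and `‖Φ(x, y)‖ = max {‖φ(x)‖, ‖ψ(y)‖}` for all `(x, y) ∈ F ⊕ G`.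
(Here `F ⊕ G` carries the sup norm `‖(x, y)‖ = max {‖x‖, ‖y‖}`.) -/
theorem cutdown_sum_orderZero_CP_contraction
    {B : Type*} [CStarAlgebra B]
    {F G : Type*} [NonUnitalCStarAlgebra F] [NonUnitalCStarAlgebra G]
    (s₁ s₂ : B) (hs₁ : star s₁ * s₁ = 1) (hs₂ : star s₂ * s₂ = 1)
    (hsum : s₁ * star s₁ + s₂ * star s₂ = 1)
    (φ : F →ₗ[ℂ] B) (ψ : G →ₗ[ℂ] B)
    (hφCP : IsCPMap φ) (hφ0 : IsOrderZero φ) (hφc : ∀ x, ‖φ x‖ ≤ ‖x‖)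
    (hψCP : IsCPMap ψ) (hψ0 : IsOrderZero ψ) (hψc : ∀ y, ‖ψ y‖ ≤ ‖y‖) :
    (∀ x y, PhiMap s₁ s₂ φ ψ (x, y)
      = s₁ * φ x * star s₁ + s₂ * ψ y * star s₂) ∧
    IsCPMap (PhiMap s₁ s₂ φ ψ) ∧ IsOrderZero (PhiMap s₁ s₂ φ ψ) ∧
    (∀ z : F × G, ‖PhiMap s₁ s₂ φ ψ z‖ ≤ ‖z‖) ∧
    ∀ x y, ‖PhiMap s₁ s₂ φ ψ (x, y)‖ = max ‖φ x‖ ‖ψ y‖ := by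
  have h12 : star s₁ * s₂ = 0 := orth_of_isometries s₁ s₂ hs₁ hs₂ hsum
  have h21 : star s₂ * s₁ = 0 := by simpa [star_mul] using congrArg star h12
  have hPhi : ∀ z : F × G,
      PhiMap s₁ s₂ φ ψ z = s₁ * φ z.1 * star s₁ + s₂ * ψ z.2 * star s₂ :=
    phiMap_apply s₁ s₂ φ ψ
  have hnormeq : ∀ z : F × G, ‖PhiMap s₁ s₂ φ ψ z‖ = max ‖φ z.1‖ ‖ψ z.2‖ := by
    intro z
    rw [hPhi z]
    exact norm_cutdown s₁ s₂ hs₁ hs₂ hsum _ _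
  refine ⟨fun x y => hPhi (x, y), ?_, ?_, ?_, fun x y => hnormeq (x, y)⟩
  · -- completely positive
    rintro n M ⟨N, hN⟩
    obtain ⟨b₁, hb₁⟩ := hφCP n (M.map Prod.fst)
      ⟨N.map Prod.fst, by rw [hN, map_fst_star_mul]⟩
    obtain ⟨b₂, hb₂⟩ := hψCP n (M.map Prod.snd)
      ⟨N.map Prod.snd, by rw [hN, map_snd_star_mul]⟩
    set S : Matrix (Fin n) (Fin n) B := Matrix.diagonal (fun _ => s₁) with hSdef
    set T : Matrix (Fin n) (Fin n) B := Matrix.diagonal (fun _ => s₂) with hTdef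
    refine ⟨S * b₁ * star S + T * b₂ * star T, ?_⟩
    rw [key_sq S T b₁ b₂ (diag_star_mul_diag _ _ hs₁) (diag_star_mul_diag _ _ hs₂)
      (diag_star_mul_diag_zero _ _ h12) (diag_star_mul_diag_zero _ _ h21),
      ← hb₁, ← hb₂]
    ext i j
    rw [Matrix.add_apply, hSdef, hTdef, conj_diag_apply, conj_diag_apply]
    simp [Matrix.map_apply, hPhi]
  · -- order zero
    rintro a b ⟨c, hc⟩ ⟨d, hd⟩ hab
    have ha1 : IsPositiveElem a.1 := ⟨c.1, by simp [hc]⟩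
    have ha2 : IsPositiveElem a.2 := ⟨c.2, by simp [hc]⟩
    have hb1 : IsPositiveElem b.1 := ⟨d.1, by simp [hd]⟩
    have hb2 : IsPositiveElem b.2 := ⟨d.2, by simp [hd]⟩
    have hmul1 : a.1 * b.1 = 0 := by simpa using congrArg Prod.fst hab
    have hmul2 : a.2 * b.2 = 0 := by simpa using congrArg Prod.snd hab
    rw [hPhi a, hPhi b, add_mul, mul_add, mul_add,
      conj_mul_conj _ _ _ hs₁, conj_mul_conj _ _ _ hs₂,
      conj_mul_conj_zero _ _ _ _ h12, conj_mul_conj_zero _ _ _ _ h21,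
      hφ0 _ _ ha1 hb1 hmul1, hψ0 _ _ ha2 hb2 hmul2]
    simp
  · -- contraction
    intro z
    calc ‖PhiMap s₁ s₂ φ ψ z‖ = max ‖φ z.1‖ ‖ψ z.2‖ := hnormeq z
      _ ≤ max ‖z.1‖ ‖z.2‖ := max_le_max (hφc _) (hψc _)
      _ = ‖z‖ := (Prod.norm_def z).symm
end
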